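/- arXiv:1912.00322 — 5 statements merged into one kernel-verified Lean document; each statement's English description precedes it below -/
import Mathlib

section
/- Let G be a Hamiltonian graph of odd order n = 2t+1 ≥ 3 with Hamiltonian cycle v_1, ..., v_n, v_1. If there exists an index i (indices mod n) such that v_i and v_{i+2} are not adjacent in G, then G has an IPD. -/
open SimpleGraph

variable {V : Type*} [Fintype V]

/-- P is a set of vertices inducing a path on n vertices in G. -/
def IsInducedPathOn (G : SimpleGraph V) (P : Set V) (n : ℕ) : Prop :=
  Nonempty (G.induce P ≃g pathGraph n)

/-- G has an induced path decomposition into induced paths each of order ≥ 2. -/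
def HasIPD (G : SimpleGraph V) : Prop :=
  ∃ D : Set (Set V), Setoid.IsPartition D ∧
    ∀ P ∈ D, ∃ n, 2 ≤ n ∧ IsInducedPathOn G P n

/-!
Start the cycle at a vertex `v i` with `v i ≁ v (i + 2)` and read it as a Hamiltonian path
`p 0, p 1, …, p (2t)`. Then `{p 0, p 1, p 2}` induces a path of order 3, and the remaining
vertices split into the consecutive pairs `{p (2c + 1), p (2c + 2)}`, each inducing an edge.
-/

namespace SimpleGraph

variable {G : SimpleGraph V}

omit [Fintype V] in
lemma isInducedPathOn_pair {a b : V} (hab : G.Adj a b) : IsInducedPathOn G {a, b} 2 := by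
  classical
  have hba : b ≠ a := hab.ne.symm
  refine ⟨Iso.symm ⟨⟨fun i => if i = 0 then ⟨a, by simp⟩ else ⟨b, by simp⟩,
      fun x => if (x : V) = a then 0 else 1, ?_, ?_⟩, ?_⟩⟩
  · intro i
    fin_cases i <;> simp [hba]
  · rintro ⟨x, rfl | rfl⟩ <;> simp [hba]
  · intro i j
    fin_cases i <;> fin_cases j <;> simp [pathGraph_adj, hab, hab.symm]

omit [Fintype V] in
lemma isInducedPathOn_triple {a b c : V} (hac : a ≠ c) (hab : G.Adj a b) (hbc : G.Adj b c)
    (hnac : ¬ G.Adj a c) : IsInducedPathOn G {a, b, c} 3 := by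
  classical
  have hba : b ≠ a := hab.ne.symm
  have hcb : c ≠ b := hbc.ne.symm
  have hca : c ≠ a := hac.symm
  have hnca : ¬ G.Adj c a := fun h => hnac h.symm
  refine ⟨Iso.symm ⟨⟨fun i => if i = 0 then ⟨a, by simp⟩ else if i = 1 then ⟨b, by simp⟩
      else ⟨c, by simp⟩,
      fun x => if (x : V) = a then 0 else if (x : V) = b then 1 else 2, ?_, ?_⟩, ?_⟩⟩
  · intro i
    fin_cases i <;> simp [hba, hcb, hca]
  · rintro ⟨x, rfl | rfl | rfl⟩ <;> simp [hba, hcb, hca]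
  · intro i j
    fin_cases i <;> fin_cases j <;>
      simp [pathGraph_adj, hab, hab.symm, hbc, hbc.symm, hnac, hnca]

omit [Fintype V] in
lemma hasIPD_of_fibers {β : Type*} (f : V → β)
    (h : ∀ y, ∃ m, 2 ≤ m ∧ IsInducedPathOn G {x | f x = f y} m) : HasIPD G :=
  ⟨(Setoid.ker f).classes, Setoid.isPartition_classes _, by rintro _ ⟨y, rfl⟩; exact h y⟩

omit [Fintype V] in
lemma hasIPD_of_odd_path {n : ℕ} (p : ℕ → V) (hp : Set.BijOn p (Set.Iio n) Set.univ)
    (hodd : Odd n) (h3 : 3 ≤ n) (hadj : ∀ k, k + 1 < n → G.Adj (p k) (p (k + 1)))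
    (h02 : ¬ G.Adj (p 0) (p 2)) : HasIPD G := by
  choose idx hidx_lt hidx using fun x => hp.surjOn (Set.mem_univ x)
  have hfiber : ∀ b, {x | (idx x - 1) / 2 = b} = p '' {k | k < n ∧ (k - 1) / 2 = b} := by
    intro b
    ext x
    constructor
    · intro hx
      exact ⟨idx x, ⟨hidx_lt x, hx⟩, hidx x⟩
    · rintro ⟨k, ⟨hk, rfl⟩, rfl⟩
      have : idx (p k) = k := hp.injOn (hidx_lt _) hk (hidx _)
      simp [this]
  -- Truncated subtraction puts `0`, `1`, `2` into block `0`; block `c ≥ 1` is `{2c + 1, 2c + 2}`.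
  refine hasIPD_of_fibers (fun x => (idx x - 1) / 2) fun y => ?_
  obtain ⟨t, rfl⟩ := hodd
  have hy : idx y < 2 * t + 1 := hidx_lt y
  rw [hfiber]
  rcases Nat.eq_zero_or_pos ((idx y - 1) / 2) with h0 | hpos
  · have hblock : {k | k < 2 * t + 1 ∧ (k - 1) / 2 = (idx y - 1) / 2} = {0, 1, 2} := by
      ext k; simp only [Set.mem_ofPred_eq, Set.mem_insert_iff, Set.mem_singleton_iff]; omega
    rw [hblock, Set.image_insert_eq, Set.image_insert_eq, Set.image_singleton]
    have hp02 : p 0 ≠ p 2 := fun h => by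
      have := hp.injOn (show 0 < 2 * t + 1 by omega) (show 2 < 2 * t + 1 by omega) h
      omega
    exact ⟨3, by norm_num, isInducedPathOn_triple hp02 (hadj 0 (by omega)) (hadj 1 (by omega)) h02⟩
  · set c := (idx y - 1) / 2 with hc
    have hblock : {k | k < 2 * t + 1 ∧ (k - 1) / 2 = c} = {2 * c + 1, 2 * c + 2} := by
      ext k; simp only [Set.mem_ofPred_eq, Set.mem_insert_iff, Set.mem_singleton_iff]; omega
    rw [hblock, Set.image_insert_eq, Set.image_singleton]
    exact ⟨2, le_rfl, isInducedPathOn_pair (hadj _ (by omega))⟩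

end SimpleGraph

lemma ZMod.bijOn_add_natCast_Iio {n : ℕ} [NeZero n] (i : ZMod n) :
    Set.BijOn (fun k : ℕ => i + k) (Set.Iio n) Set.univ := by
  refine ⟨Set.mapsTo_univ _ _, fun a ha b hb hab => ?_, fun x _ => ⟨(x - i).val, ZMod.val_lt _, ?_⟩⟩
  · have := (ZMod.natCast_eq_natCast_iff' a b n).1 (add_left_cancel hab)
    rwa [Nat.mod_eq_of_lt ha, Nat.mod_eq_of_lt hb] at this
  · simp

theorem hamiltonian_odd_missing_chord_IPD_general (G : SimpleGraph V) (n : ℕ)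
    (hodd : Odd n) (h3 : 3 ≤ n)
    (v : ZMod n → V) (hbij : Function.Bijective v)
    (hcyc : ∀ i : ZMod n, G.Adj (v i) (v (i + 1)))
    (hchord : ∃ i : ZMod n, ¬ G.Adj (v i) (v (i + 2))) :
    HasIPD G := by
  obtain ⟨i, hi⟩ := hchord
  have : NeZero n := ⟨by omega⟩
  refine hasIPD_of_odd_path (fun k : ℕ => v (i + k))
    ((Set.bijOn_univ.2 hbij).comp (ZMod.bijOn_add_natCast_Iio i)) hodd h3
    (fun k _ => by simpa [add_assoc] using hcyc (i + k)) (by simpa using hi)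

/-- a Hamiltonian graph of odd order n = 2t+1 ≥ 3 whose Hamiltonian cycle
v_1, ..., v_n, v_1 has some i with v_i not adjacent to v_{i+2} admits an IPD. -/
theorem hamiltonian_odd_missing_chord_IPD (G : SimpleGraph V) (n : ℕ)
    (hn : n = Fintype.card V) (hodd : Odd n) (h3 : 3 ≤ n)
    (v : ZMod n → V) (hbij : Function.Bijective v)
    (hcyc : ∀ i : ZMod n, G.Adj (v i) (v (i + 1)))
    (hchord : ∃ i : ZMod n, ¬ G.Adj (v i) (v (i + 2))) :
    HasIPD G :=
  hamiltonian_odd_missing_chord_IPD_general G n hodd h3 v hbij hcyc hchord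
end

section
/- Every Hamiltonian graph that is not a complete graph of odd order has an IPD. -/
open SimpleGraph

variable {V : Type*} [Fintype V]

lemma zmod_eq_cast_iff {n a : ℕ} [NeZero n] (j : ZMod n) (h : a < n) :
    j = (a : ZMod n) ↔ j.val = a := by
  constructor
  · rintro rfl; exact ZMod.val_cast_of_lt h
  · intro h'; apply ZMod.val_injective; rw [ZMod.val_cast_of_lt h]; exact h'

lemma zmod_natCast_val {n : ℕ} [NeZero n] (a : ZMod n) : ((a.val : ℕ) : ZMod n) = a := by
  apply ZMod.val_injective; exact ZMod.val_cast_of_lt (ZMod.val_lt a)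

lemma pair_path [DecidableEq V] {G : SimpleGraph V} {a b : V} (h : G.Adj a b) :
    IsInducedPathOn G {a, b} 2 := by
  have hab : a ≠ b := h.ne
  refine ⟨Iso.symm ⟨⟨![⟨a, by simp⟩, ⟨b, by simp⟩],
    fun x => if (x : V) = a then 0 else 1, ?_, ?_⟩, ?_⟩⟩
  · intro i; fin_cases i <;> simp [hab.symm]
  · rintro ⟨x, hx⟩
    simp only [Set.mem_insert_iff, Set.mem_singleton_iff] at hx
    rcases hx with rfl | rfl <;> simp [hab.symm]
  · intro i j
    fin_cases i <;> fin_cases j <;>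
      simp [comap_adj, pathGraph_adj, h, h.symm, G.irrefl]

lemma triple_path [DecidableEq V] {G : SimpleGraph V} {a b c : V} (hab : G.Adj a b)
    (hbc : G.Adj b c) (hac : ¬ G.Adj a c) (hne : a ≠ c) :
    IsInducedPathOn G {a, b, c} 3 := by
  have h1 : a ≠ b := hab.ne
  have h2 : b ≠ c := hbc.ne
  have hca : ¬ G.Adj c a := fun h => hac h.symm
  refine ⟨Iso.symm ⟨⟨![⟨a, by simp⟩, ⟨b, by simp⟩, ⟨c, by simp⟩],
    fun x => if (x : V) = a then 0 else if (x : V) = b then 1 else 2, ?_, ?_⟩, ?_⟩⟩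
  · intro i; fin_cases i <;> simp [h1, h1.symm, h2, h2.symm, hne, hne.symm]
  · rintro ⟨x, hx⟩
    simp only [Set.mem_insert_iff, Set.mem_singleton_iff] at hx
    rcases hx with rfl | rfl | rfl <;> simp [h1, h1.symm, h2, h2.symm, hne, hne.symm]
  · intro i j
    fin_cases i <;> fin_cases j <;>
      simp [comap_adj, pathGraph_adj, hab, hab.symm, hbc, hbc.symm, hac, hca, G.irrefl]

lemma partition_of_rep {α : Type*} (c : α → Set α) (h1 : ∀ a, a ∈ c a)
    (h2 : ∀ a b, a ∈ c b → c a = c b) : Setoid.IsPartition (Set.range c) := by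
  constructor
  · rintro ⟨a, ha⟩
    exact absurd (ha ▸ h1 a) (Set.notMem_empty a)
  · intro a
    refine ⟨c a, ⟨⟨a, rfl⟩, h1 a⟩, ?_⟩
    rintro S ⟨⟨b, rfl⟩, haS⟩
    exact (h2 a b haS).symm

lemma hasIPD_of_fibers {n : ℕ} [NeZero n] (G : SimpleGraph V) (f : ZMod n ≃ V) (F : ℕ → ℕ)
    (h : ∀ m, m < n → ∃ t, 2 ≤ t ∧ IsInducedPathOn G (f '' {j : ZMod n | F j.val = F m}) t) :
    HasIPD G := by
  set c : V → Set V := fun v => f '' {j : ZMod n | F j.val = F (f.symm v).val} with hc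
  refine ⟨Set.range c, partition_of_rep c ?_ ?_, ?_⟩
  · intro v; exact ⟨f.symm v, rfl, f.apply_symm_apply v⟩
  · intro u v hu
    obtain ⟨j, hj, rfl⟩ := hu
    simp only [hc, f.symm_apply_apply]
    rw [hj]
  · rintro P ⟨v, rfl⟩
    exact h (f.symm v).val (ZMod.val_lt _)

lemma fiber_pair {n : ℕ} [NeZero n] (f : ZMod n ≃ V) (F : ℕ → ℕ) {r a b : ℕ}
    (ha : a < n) (hb : b < n)
    (h : ∀ m, m < n → (F m = r ↔ m = a ∨ m = b)) :
    f '' {j : ZMod n | F j.val = r} = {f a, f b} := by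
  have hset : {j : ZMod n | F j.val = r} = {(a : ZMod n), (b : ZMod n)} := by
    ext j
    simp only [Set.mem_setOf_eq, Set.mem_insert_iff, Set.mem_singleton_iff,
      zmod_eq_cast_iff j ha, zmod_eq_cast_iff j hb]
    exact h j.val (ZMod.val_lt j)
  rw [hset, Set.image_insert_eq, Set.image_singleton]

lemma fiber_triple {n : ℕ} [NeZero n] (f : ZMod n ≃ V) (F : ℕ → ℕ) {r a b c : ℕ}
    (ha : a < n) (hb : b < n) (hcn : c < n)
    (h : ∀ m, m < n → (F m = r ↔ m = a ∨ m = b ∨ m = c)) :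
    f '' {j : ZMod n | F j.val = r} = {f a, f b, f c} := by
  have hset : {j : ZMod n | F j.val = r} = {(a : ZMod n), (b : ZMod n), (c : ZMod n)} := by
    ext j
    simp only [Set.mem_setOf_eq, Set.mem_insert_iff, Set.mem_singleton_iff,
      zmod_eq_cast_iff j ha, zmod_eq_cast_iff j hb, zmod_eq_cast_iff j hcn]
    exact h j.val (ZMod.val_lt j)
  rw [hset, Set.image_insert_eq, Set.image_insert_eq, Set.image_singleton]

lemma ipd_of_eq {G : SimpleGraph V} {P Q : Set V} {t : ℕ} (h : P = Q)
    (hq : IsInducedPathOn G Q t) : IsInducedPathOn G P t := h ▸ hq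

set_option maxHeartbeats 1000000 in
lemma hasIPD_even [DecidableEq V] {n : ℕ} (hn : 3 ≤ n) (hne : n % 2 = 0) (G : SimpleGraph V)
    (f : ZMod n ≃ V) (hadj : ∀ i, G.Adj (f i) (f (i + 1))) : HasIPD G := by
  haveI : NeZero n := ⟨by omega⟩
  have hadjn : ∀ a : ℕ, G.Adj (f (a : ZMod n)) (f ((a + 1 : ℕ) : ZMod n)) := by
    intro a
    have hstep := hadj ((a : ℕ) : ZMod n)
    have hcast : ((a : ℕ) : ZMod n) + 1 = ((a + 1 : ℕ) : ZMod n) := by push_cast; ring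
    rwa [hcast] at hstep
  set F : ℕ → ℕ := fun m => 2 * (m / 2) with hF
  have hFeval : ∀ m', F m' = 2 * (m' / 2) := fun _ => rfl
  apply hasIPD_of_fibers G f F
  intro m hm
  refine ⟨2, le_rfl, ?_⟩
  have h1 : 2 * (m / 2) < n := by omega
  have h2 : 2 * (m / 2) + 1 < n := by omega
  have hFm : F m = 2 * (m / 2) := hFeval m
  rw [hFm]
  refine ipd_of_eq (fiber_pair f F h1 h2 ?_) (pair_path (hadjn (2 * (m / 2))))
  intro m' hm'
  rw [hFeval m']
  omega

set_option maxHeartbeats 2000000 in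
lemma hasIPD_odd [DecidableEq V] {n k : ℕ} (hn : 3 ≤ n) (hno : n % 2 = 1)
    (hk2 : 2 ≤ k) (hkn : 2 * k < n) (G : SimpleGraph V) (f : ZMod n ≃ V)
    (hchord : ∀ j : ℕ, 1 ≤ j → j < k → ∀ i, G.Adj (f i) (f (i + (j : ZMod n))))
    (hnadj : ¬ G.Adj (f ((0 : ℕ) : ZMod n)) (f ((k : ℕ) : ZMod n))) : HasIPD G := by
  haveI : NeZero n := ⟨by omega⟩
  have hchordn : ∀ j a : ℕ, 1 ≤ j → j < k →
      G.Adj (f ((a : ℕ) : ZMod n)) (f ((a + j : ℕ) : ZMod n)) := by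
    intro j a h1 h2
    have hstep := hchord j h1 h2 ((a : ℕ) : ZMod n)
    have hc : ((a : ℕ) : ZMod n) + ((j : ℕ) : ZMod n) = ((a + j : ℕ) : ZMod n) := by
      push_cast; ring
    rwa [hc] at hstep
  have hadjn : ∀ a : ℕ, G.Adj (f (a : ZMod n)) (f ((a + 1 : ℕ) : ZMod n)) :=
    fun a => hchordn 1 a le_rfl (by omega)
  have htab : G.Adj (f ((0 : ℕ) : ZMod n)) (f ((k - 1 : ℕ) : ZMod n)) := by
    have hstep := hchordn (k - 1) 0 (by omega) (by omega)
    rwa [show 0 + (k - 1) = k - 1 by omega] at hstep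
  have htbc : G.Adj (f ((k - 1 : ℕ) : ZMod n)) (f ((k : ℕ) : ZMod n)) := by
    have hstep := hadjn (k - 1)
    rwa [show k - 1 + 1 = k by omega] at hstep
  have htne : f ((0 : ℕ) : ZMod n) ≠ f ((k : ℕ) : ZMod n) := by
    intro h
    have heq := f.injective h
    have hval : ((k : ℕ) : ZMod n).val = k := ZMod.val_cast_of_lt (by omega)
    rw [← heq] at hval
    simp only [Nat.cast_zero, ZMod.val_zero] at hval
    omega
  have hwrap : 3 ≤ k → G.Adj (f ((1 : ℕ) : ZMod n)) (f ((n - 1 : ℕ) : ZMod n)) := by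
    intro hk3
    have hstep := hchord 2 (by omega) (by omega) (((n - 1 : ℕ) : ZMod n))
    have hc : ((n - 1 : ℕ) : ZMod n) + ((2 : ℕ) : ZMod n) = ((1 : ℕ) : ZMod n) := by
      have e1 : ((n - 1 : ℕ) : ZMod n) + ((2 : ℕ) : ZMod n) = ((n - 1 + 2 : ℕ) : ZMod n) := by
        push_cast; ring
      rw [e1, show n - 1 + 2 = n + 1 by omega]
      push_cast [ZMod.natCast_self]
      ring
    rw [hc] at hstep
    exact hstep.symm
  by_cases hke : k % 2 = 0
  · -- k even
    set F : ℕ → ℕ := fun m => if m = 0 ∨ m = k - 1 ∨ m = k then 0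
      else if m < k then 2 * ((m - 1) / 2) + 1
      else k + 1 + 2 * ((m - k - 1) / 2) with hF
    have hFeval : ∀ m', F m' = if m' = 0 ∨ m' = k - 1 ∨ m' = k then 0
      else if m' < k then 2 * ((m' - 1) / 2) + 1
      else k + 1 + 2 * ((m' - k - 1) / 2) := fun _ => rfl
    apply hasIPD_of_fibers G f F
    intro m hm
    by_cases hm0 : m = 0 ∨ m = k - 1 ∨ m = k
    · refine ⟨3, by omega, ?_⟩
      have hFm : F m = 0 := by rw [hFeval m]; split_ifs <;> first | omega | (simp only [false_iff, iff_false, true_iff, iff_true, not_or]; omega)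
      rw [hFm]
      refine ipd_of_eq (fiber_triple f F (show (0:ℕ) < n by omega)
        (show k - 1 < n by omega) (show k < n by omega) ?_)
        (triple_path htab htbc hnadj htne)
      intro m' hm'
      rw [hFeval m']
      split_ifs <;> first | omega | (simp only [false_iff, iff_false, true_iff, iff_true, not_or]; omega)
    · by_cases hmk : m < k
      · refine ⟨2, le_rfl, ?_⟩
        have hb1 : 2 * ((m - 1) / 2) + 1 < n := by omega
        have hb2 : 2 * ((m - 1) / 2) + 1 + 1 < n := by omega
        have hFm : F m = 2 * ((m - 1) / 2) + 1 := by rw [hFeval m]; split_ifs <;> first | omega | (simp only [false_iff, iff_false, true_iff, iff_true, not_or]; omega)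
        rw [hFm]
        refine ipd_of_eq (fiber_pair f F hb1 hb2 ?_)
          (pair_path (hadjn (2 * ((m - 1) / 2) + 1)))
        intro m' hm'
        rw [hFeval m']
        split_ifs <;> first | omega | (simp only [false_iff, iff_false, true_iff, iff_true, not_or]; omega)
      · refine ⟨2, le_rfl, ?_⟩
        have hb1 : k + 1 + 2 * ((m - k - 1) / 2) < n := by omega
        have hb2 : k + 1 + 2 * ((m - k - 1) / 2) + 1 < n := by omega
        have hFm : F m = k + 1 + 2 * ((m - k - 1) / 2) := by rw [hFeval m]; split_ifs <;> first | omega | (simp only [false_iff, iff_false, true_iff, iff_true, not_or]; omega)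
        rw [hFm]
        refine ipd_of_eq (fiber_pair f F hb1 hb2 ?_)
          (pair_path (hadjn (k + 1 + 2 * ((m - k - 1) / 2))))
        intro m' hm'
        rw [hFeval m']
        split_ifs <;> first | omega | (simp only [false_iff, iff_false, true_iff, iff_true, not_or]; omega)
  · -- k odd
    have hk3 : 3 ≤ k := by omega
    set F : ℕ → ℕ := fun m => if m = 0 ∨ m = k - 1 ∨ m = k then 0
      else if m = 1 ∨ m = n - 1 then 1
      else if m < k then 2 * (m / 2)
      else k + 1 + 2 * ((m - k - 1) / 2) with hF
    have hFeval : ∀ m', F m' = if m' = 0 ∨ m' = k - 1 ∨ m' = k then 0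
      else if m' = 1 ∨ m' = n - 1 then 1
      else if m' < k then 2 * (m' / 2)
      else k + 1 + 2 * ((m' - k - 1) / 2) := fun _ => rfl
    apply hasIPD_of_fibers G f F
    intro m hm
    by_cases hm0 : m = 0 ∨ m = k - 1 ∨ m = k
    · refine ⟨3, by omega, ?_⟩
      have hFm : F m = 0 := by rw [hFeval m]; split_ifs <;> first | omega | (simp only [false_iff, iff_false, true_iff, iff_true, not_or]; omega)
      rw [hFm]
      refine ipd_of_eq (fiber_triple f F (show (0:ℕ) < n by omega)
        (show k - 1 < n by omega) (show k < n by omega) ?_)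
        (triple_path htab htbc hnadj htne)
      intro m' hm'
      rw [hFeval m']
      split_ifs <;> first | omega | (simp only [false_iff, iff_false, true_iff, iff_true, not_or]; omega)
    · by_cases hm1 : m = 1 ∨ m = n - 1
      · refine ⟨2, le_rfl, ?_⟩
        have hFm : F m = 1 := by rw [hFeval m]; split_ifs <;> first | omega | (simp only [false_iff, iff_false, true_iff, iff_true, not_or]; omega)
        rw [hFm]
        refine ipd_of_eq (fiber_pair f F (show (1:ℕ) < n by omega)
          (show n - 1 < n by omega) ?_) (pair_path (hwrap hk3))
        intro m' hm'
        rw [hFeval m']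
        split_ifs <;> first | omega | (simp only [false_iff, iff_false, true_iff, iff_true, not_or]; omega)
      · by_cases hmk : m < k
        · refine ⟨2, le_rfl, ?_⟩
          have hb1 : 2 * (m / 2) < n := by omega
          have hb2 : 2 * (m / 2) + 1 < n := by omega
          have hFm : F m = 2 * (m / 2) := by rw [hFeval m]; split_ifs <;> first | omega | (simp only [false_iff, iff_false, true_iff, iff_true, not_or]; omega)
          rw [hFm]
          refine ipd_of_eq (fiber_pair f F hb1 hb2 ?_) (pair_path (hadjn (2 * (m / 2))))
          intro m' hm'
          rw [hFeval m']
          split_ifs <;> first | omega | (simp only [false_iff, iff_false, true_iff, iff_true, not_or]; omega)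
        · refine ⟨2, le_rfl, ?_⟩
          have hb1 : k + 1 + 2 * ((m - k - 1) / 2) < n := by omega
          have hb2 : k + 1 + 2 * ((m - k - 1) / 2) + 1 < n := by omega
          have hFm : F m = k + 1 + 2 * ((m - k - 1) / 2) := by
            rw [hFeval m]; split_ifs <;> first | omega | (simp only [false_iff, iff_false, true_iff, iff_true, not_or]; omega)
          rw [hFm]
          refine ipd_of_eq (fiber_pair f F hb1 hb2 ?_)
            (pair_path (hadjn (k + 1 + 2 * ((m - k - 1) / 2))))
          intro m' hm'
          rw [hFeval m']
          split_ifs <;> first | omega | (simp only [false_iff, iff_false, true_iff, iff_true, not_or]; omega)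


set_option maxHeartbeats 1000000 in
/-- every Hamiltonian graph that is not a complete graph of odd order
has an IPD. -/
theorem hamiltonian_not_odd_complete_IPD [DecidableEq V] (G : SimpleGraph V)
    (hham : G.IsHamiltonian)
    (hnc : ¬ (G = ⊤ ∧ Odd (Fintype.card V))) :
    HasIPD G := by
  by_cases h1 : Fintype.card V = 1
  · exfalso
    apply hnc
    haveI hsub : Subsingleton V := by
      rw [← Fintype.card_le_one_iff_subsingleton, h1]
    refine ⟨?_, by rw [h1]; exact odd_one⟩
    ext a b
    simp only [top_adj]
    constructor
    · intro h; exact absurd (Subsingleton.elim a b) h.ne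
    · intro h; exact absurd (Subsingleton.elim a b) h
  · obtain ⟨a, p, hp⟩ := hham h1
    obtain ⟨n, hn⟩ : ∃ m, Fintype.card V = m := ⟨_, rfl⟩
    have hlen : p.length = n := by rw [hp.length_eq, hn]
    have hn3 : 3 ≤ n := hlen ▸ hp.isCycle.three_le_length
    haveI : NeZero n := ⟨by omega⟩
    haveI : Fact (1 < n) := ⟨by omega⟩
    set g : ZMod n → V := fun i => p.getVert i.val with hg
    have hsurj : Function.Surjective g := by
      intro v
      obtain ⟨j, hjv, hjle⟩ := SimpleGraph.Walk.mem_support_iff_exists_getVert.mp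
        (hp.mem_support v)
      rcases Nat.lt_or_ge j n with hj | hj
      · refine ⟨(j : ZMod n), ?_⟩
        show p.getVert ((j : ZMod n)).val = v
        rw [ZMod.val_cast_of_lt hj]
        exact hjv
      · have hjn : j = n := by omega
        refine ⟨0, ?_⟩
        show p.getVert ((0 : ZMod n)).val = v
        rw [ZMod.val_zero, p.getVert_zero]
        rw [hjn, p.getVert_of_length_le (le_of_eq hlen)] at hjv
        exact hjv
    have hbij : Function.Bijective g := by
      rw [Fintype.bijective_iff_surjective_and_card]
      refine ⟨hsurj, ?_⟩
      rw [ZMod.card]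
      omega
    set f : ZMod n ≃ V := Equiv.ofBijective g hbij with hf
    have hfg : ∀ i, f i = p.getVert i.val := fun i => rfl
    have hadj : ∀ i, G.Adj (f i) (f (i + 1)) := by
      intro i
      have hlt : i.val < n := ZMod.val_lt i
      have hval : (i + 1).val = (i.val + 1) % n := by
        rw [ZMod.val_add, ZMod.val_one]
      rcases Nat.lt_or_ge (i.val + 1) n with h | h
      · rw [hfg i, hfg (i + 1), hval, Nat.mod_eq_of_lt h]
        exact p.adj_getVert_succ (by omega)
      · have hieq : i.val + 1 = n := by omega
        have hv0 : (i + 1).val = 0 := by rw [hval, hieq, Nat.mod_self]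
        rw [hfg i, hfg (i + 1), hv0, p.getVert_zero]
        have hstep := p.adj_getVert_succ (i := i.val) (by omega)
        rw [show i.val + 1 = n by omega,
          p.getVert_of_length_le (le_of_eq hlen)] at hstep
        exact hstep
    by_cases hpar : n % 2 = 0
    · exact hasIPD_even hn3 hpar G f hadj
    · have hno : n % 2 = 1 := by omega
      have hGne : G ≠ ⊤ := by
        intro hG
        exact hnc ⟨hG, by rw [hn]; exact Nat.odd_iff.mpr hno⟩
      have hex : ∃ u v : V, u ≠ v ∧ ¬ G.Adj u v := by
        by_contra hcon
        push_neg at hcon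
        apply hGne
        ext x y
        simp only [top_adj]
        exact ⟨fun h => h.ne, fun h => hcon x y h⟩
      obtain ⟨u, v, huv, hnuv⟩ := hex
      have hd0 : f.symm v - f.symm u ≠ 0 := by
        rw [sub_ne_zero]
        exact fun h => huv (by rw [← f.apply_symm_apply u, ← f.apply_symm_apply v, h])
      set k0 := (f.symm v - f.symm u).val with hk0
      have hk0n : k0 < n := ZMod.val_lt _
      have hdcast : ((k0 : ℕ) : ZMod n) = f.symm v - f.symm u := zmod_natCast_val _
      have hQk0 : ¬ G.Adj (f (f.symm u)) (f (f.symm u + (k0 : ZMod n))) := by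
        rw [hdcast, show f.symm u + (f.symm v - f.symm u) = f.symm v from by ring,
          f.apply_symm_apply, f.apply_symm_apply]
        exact hnuv
      have hk02 : 2 ≤ k0 := by
        rcases Nat.lt_or_ge k0 2 with hlt | hge
        · exfalso
          have h01 : k0 = 0 ∨ k0 = 1 := by omega
          rcases h01 with h | h
          · rw [h] at hdcast
            simp only [Nat.cast_zero] at hdcast
            exact hd0 hdcast.symm
          · apply hQk0
            rw [h]
            simpa using hadj (f.symm u)
        · exact hge
      have hk0n2 : k0 ≤ n - 2 := by
        by_contra hcon
        have hk0e : k0 = n - 1 := by omega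
        apply hQk0
        have hone : ((n - 1 : ℕ) : ZMod n) + ((1 : ℕ) : ZMod n) = 0 := by
          rw [show ((n - 1 : ℕ) : ZMod n) + ((1 : ℕ) : ZMod n) = ((n - 1 + 1 : ℕ) : ZMod n)
            from by push_cast; ring]
          rw [show n - 1 + 1 = n by omega, ZMod.natCast_self]
        have hc : ((k0 : ℕ) : ZMod n) = -1 := by
          rw [hk0e]
          have := eq_neg_of_add_eq_zero_left hone
          rw [this]
          push_cast
          ring
        rw [hc]
        have hstep := hadj (f.symm u - 1)
        rw [show f.symm u - 1 + 1 = f.symm u from by ring] at hstep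
        rw [show f.symm u + -1 = f.symm u - 1 from by ring]
        exact hstep.symm
      have hQex : ∃ k' : ℕ, 2 ≤ k' ∧ ∃ i : ZMod n, ¬ G.Adj (f i) (f (i + (k' : ZMod n))) :=
        ⟨k0, hk02, f.symm u, hQk0⟩
      classical
      set k := Nat.find hQex with hkdef
      obtain ⟨hk2, i0, hknadj⟩ : 2 ≤ k ∧ ∃ i : ZMod n, ¬ G.Adj (f i) (f (i + (k : ZMod n))) :=
        Nat.find_spec hQex
      have hkle : k ≤ k0 := Nat.find_min' hQex ⟨hk02, f.symm u, hQk0⟩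
      have hkmin : ∀ j, 2 ≤ j → j < k → ∀ i : ZMod n, G.Adj (f i) (f (i + (j : ZMod n))) := by
        intro j hj2 hjk i
        by_contra hcon
        exact Nat.find_min hQex hjk ⟨hj2, i, hcon⟩
      have hQnk : 2 ≤ n - k ∧ ∃ i : ZMod n, ¬ G.Adj (f i) (f (i + ((n - k : ℕ) : ZMod n))) := by
        refine ⟨by omega, i0 + (k : ZMod n), ?_⟩
        have hzero : ((n - k : ℕ) : ZMod n) + ((k : ℕ) : ZMod n) = 0 := by
          rw [show ((n - k : ℕ) : ZMod n) + ((k : ℕ) : ZMod n) = ((n - k + k : ℕ) : ZMod n)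
            from by push_cast; ring]
          rw [show n - k + k = n by omega, ZMod.natCast_self]
        have hc : ((n - k : ℕ) : ZMod n) = -((k : ℕ) : ZMod n) :=
          eq_neg_of_add_eq_zero_left hzero
        rw [hc, show i0 + (k : ZMod n) + -((k : ℕ) : ZMod n) = i0 from by ring]
        exact fun h => hknadj h.symm
      have h2k : 2 * k < n := by
        have hle2 : k ≤ n - k := Nat.find_min' hQex hQnk
        omega
      set f' : ZMod n ≃ V := (Equiv.addLeft i0).trans f with hf'
      have hf'app : ∀ x, f' x = f (i0 + x) := fun x => rfl
      apply hasIPD_odd hn3 hno hk2 h2k G f'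
      · intro j hj1 hjk i
        rcases eq_or_lt_of_le hj1 with hj | hj
        · rw [hf'app, hf'app, ← hj]
          have hstep := hadj (i0 + i)
          rwa [show i0 + i + 1 = i0 + (i + ((1 : ℕ) : ZMod n)) from by push_cast; ring] at hstep
        · have hstep := hkmin j hj hjk (i0 + i)
          rw [hf'app, hf'app]
          rwa [show i0 + i + (j : ZMod n) = i0 + (i + (j : ZMod n)) from by ring] at hstep
      · rw [hf'app, hf'app, show i0 + ((0 : ℕ) : ZMod n) = i0 from by push_cast; ring]
        exact hknadj
end

section
/- Let G be an r-regular graph and let H be a subset of vertices of G such that the subgraph induced by H has a block decomposition in which every block is a complete graph of odd order, and H is a union of components of G minus some vertex set S. If B is a leaf block of the induced subgraph on H, with B isomorphic to K_p for some 1 ≤ p ≤ r, then the number of edges of G joining V(B) to S is at least (p-1)(r-p+1), and in particular at least r-1. -/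
/-! If a vertex `v` of a nontrivial block `B` of `G[H]` had a neighbour `w ∈ H \ B` while `v` is
not a cut vertex, a path from `w` to a neighbour `y` of `v` in `B` avoiding `v` would close a
cycle through `v` and `y`; the union of `B` with that cycle has no cut vertex, contradicting the
maximality of `B`. So in a leaf block all vertices but at most one have their neighbours in
`B ∪ S`, hence `r - p + 1` of them in `S`. The vertex of a block `{v}` has no neighbour in `H`
at all (an edge would be a larger block), which gives `r` edges when `p = 1`; for `p ≥ 2`,
`(p - 1)(r - p + 1) ≥ r - 1`. -/

open SimpleGraph

variable {V : Type*} [Fintype V]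

/-- The induced subgraph on B is connected (or a single vertex / empty ok? require Connected)
and has no cut vertex. -/
def NoCutVertexSet (G : SimpleGraph V) (B : Set V) : Prop :=
  (G.induce B).Connected ∧ ∀ v ∈ B, (G.induce (B \ {v})).Preconnected

/-- B is a block (maximal 2-connected piece, in the sense of no cut vertex) of the subgraph
of G induced on H. -/
def IsBlockWithin (G : SimpleGraph V) (H B : Set V) : Prop :=
  B ⊆ H ∧ NoCutVertexSet G B ∧
    ∀ B', B ⊆ B' → B' ⊆ H → NoCutVertexSet G B' → B' = B

/-- B is a block of G. -/
def IsBlock (G : SimpleGraph V) (B : Set V) : Prop :=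
  IsBlockWithin G Set.univ B

/-- The set B induces a complete graph of odd order. -/
def IsOddComplete (G : SimpleGraph V) (B : Set V) : Prop :=
  Odd B.ncard ∧ ∀ u ∈ B, ∀ v ∈ B, u ≠ v → G.Adj u v

/-- v is a cut vertex of the subgraph of G induced on H. -/
def IsCutVertexWithin (G : SimpleGraph V) (H : Set V) (v : V) : Prop :=
  v ∈ H ∧ ∃ x y : V, ∃ hx : x ∈ H \ {v}, ∃ hy : y ∈ H \ {v},
    (G.induce H).Reachable ⟨x, hx.1⟩ ⟨y, hy.1⟩ ∧
      ¬ (G.induce (H \ {v})).Reachable ⟨x, hx⟩ ⟨y, hy⟩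

/-- B is a leaf block of the subgraph of G induced on H: a block containing at most one
cut vertex. -/
def IsLeafBlockWithin (G : SimpleGraph V) (H B : Set V) : Prop :=
  IsBlockWithin G H B ∧ {v ∈ B | IsCutVertexWithin G H v}.Subsingleton

/-- C is a connected component of G - S. -/
def IsComponentAvoiding (G : SimpleGraph V) (S C : Set V) : Prop :=
  C.Nonempty ∧ Disjoint C S ∧ (G.induce C).Connected ∧
    ∀ x ∈ C, ∀ y, y ∉ S → G.Adj x y → y ∈ C

/-- G is claw-free. -/
def ClawFree (G : SimpleGraph V) : Prop :=
  IsEmpty (completeBipartiteGraph (Fin 1) (Fin 3) ↪g G)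

section
variable {V : Type*} {G : SimpleGraph V}

theorem NoCutVertexSet.preconnected_sdiff {X : Set V} (hX : NoCutVertexSet G X) (u : V) :
    (G.induce (X \ {u})).Preconnected := by
  by_cases hu : u ∈ X
  · exact hX.2 u hu
  · rw [Set.sdiff_singleton_eq_self hu]
    exact hX.1.preconnected

theorem NoCutVertexSet.union {X Y : Set V} (hX : NoCutVertexSet G X) (hY : NoCutVertexSet G Y)
    {a b : V} (ha : a ∈ X ∩ Y) (hb : b ∈ X ∩ Y) (hab : a ≠ b) : NoCutVertexSet G (X ∪ Y) := by
  refine ⟨induce_union_connected hX.1.preconnected hY.1.preconnected ⟨a, ha⟩, fun u _ => ?_⟩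
  have hne : ((X \ {u}) ∩ (Y \ {u})).Nonempty := by
    by_cases hau : a = u
    · exact ⟨b, ⟨hb.1, fun h => hab (hau.trans h.symm)⟩, ⟨hb.2, fun h => hab (hau.trans h.symm)⟩⟩
    · exact ⟨a, ⟨ha.1, hau⟩, ⟨ha.2, hau⟩⟩
  rw [Set.union_sdiff_distrib]
  exact (induce_union_connected (hX.preconnected_sdiff u) (hY.preconnected_sdiff u)
    hne).preconnected

theorem Set.Subsingleton.preconnected_induce {s : Set V} (hs : s.Subsingleton) :
    (G.induce s).Preconnected :=
  haveI := hs.coe_sort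
  Preconnected.of_subsingleton

theorem noCutVertexSet_pair {v w : V} (h : G.Adj v w) : NoCutVertexSet G {v, w} := by
  refine ⟨induce_pair_connected_of_adj h, fun u hu => Set.Subsingleton.preconnected_induce ?_⟩
  rcases hu with rfl | rfl
  · exact Set.subsingleton_singleton.anti fun x hx => by aesop
  · exact (Set.subsingleton_singleton (a := v)).anti fun x hx => by aesop

theorem SimpleGraph.Walk.IsPath.preconnected_induce_support_sdiff_end {u v : V} {p : G.Walk u v}
    (hp : p.IsPath) : (G.induce ({x | x ∈ p.support} \ {v})).Preconnected := by
  by_cases hnil : p.Nil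
  · refine (Set.subsingleton_singleton (a := u).anti ?_).preconnected_induce
    intro x hx
    simpa [Walk.nil_iff_support_eq.mp hnil] using hx.1
  · have hv : v ∉ p.support.dropLast := by
      have hnd := hp.support_nodup
      rw [← p.dropLast_support_concat, List.nodup_append] at hnd
      exact fun h => by simpa using hnd.2.2 v h
    have hsupp : {x | x ∈ p.support} \ {v} = {x | x ∈ p.dropLast.support} := by
      ext x
      rw [Walk.support_dropLast hnil, Set.mem_ofPred_eq, ← p.dropLast_support_concat]
      simp only [Set.mem_sdiff, Set.mem_ofPred_eq, List.mem_append, List.mem_singleton,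
        Set.mem_singleton_iff]
      grind
    rw [hsupp]
    exact p.dropLast.connected_induce_support.preconnected

theorem SimpleGraph.Walk.IsCycle.noCutVertexSet {u : V} {c : G.Walk u u} (hc : c.IsCycle) :
    NoCutVertexSet G {x | x ∈ c.support} := by
  classical
  refine ⟨c.connected_induce_support, fun v hv => ?_⟩
  have hrot : (c.rotate v hv).IsCycle := hc.rotate hv
  -- the tail of the cycle rotated to `v` is a path through all of its vertices, ending at `v`
  have hsupp : {x | x ∈ c.support} = {x | x ∈ (c.rotate v hv).tail.support} := by
    ext x
    rw [Set.mem_ofPred_eq, Set.mem_ofPred_eq, ← c.mem_support_rotate_iff v hv,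
      Walk.mem_support_iff, Walk.support_tail_of_not_nil _ hrot.not_nil]
    have := Walk.end_mem_tail_support hrot.not_nil
    grind
  rw [hsupp]
  exact hrot.isPath_tail.preconnected_induce_support_sdiff_end

theorem SimpleGraph.Reachable.exists_isPath_of_induce {s : Set V} {a b : s}
    (h : (G.induce s).Reachable a b) :
    ∃ p : G.Walk a b, p.IsPath ∧ ∀ x ∈ p.support, x ∈ s := by
  classical
  obtain ⟨q⟩ := h
  let q' := q.map (Embedding.induce s).toHom
  refine ⟨q'.bypass, q'.bypass_isPath, fun x hx => ?_⟩
  obtain ⟨y, -, rfl⟩ :=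
    List.mem_map.mp (Walk.support_map _ q ▸ q'.support_bypass_subset_support hx)
  exact y.2

theorem SimpleGraph.Walk.IsPath.isCycle_cons_concat {v w y : V} {p : G.Walk w y} (hp : p.IsPath)
    (hvp : v ∉ p.support) (hvw : G.Adj v w) (hyv : G.Adj y v) (hwy : w ≠ y) :
    (Walk.cons hvw (p.concat hyv)).IsCycle := by
  refine (Walk.cons_isCycle_iff _ _).mpr ⟨hp.concat hvp hyv, fun h => ?_⟩
  rw [Walk.edges_concat, List.concat_eq_append, List.mem_append, List.mem_singleton] at h
  rcases h with h | h
  · exact hvp (p.fst_mem_support_of_mem_edges h)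
  · rcases Sym2.eq_iff.mp h with ⟨rfl, rfl⟩ | ⟨-, rfl⟩ <;> exact hwy rfl

theorem IsBlockWithin.isCutVertexWithin_of_adj {H B : Set V} (hB : IsBlockWithin G H B)
    (hnt : B.Nontrivial) {v w : V} (hv : v ∈ B) (hw : w ∈ H) (hwB : w ∉ B) (hvw : G.Adj v w) :
    IsCutVertexWithin G H v := by
  obtain ⟨hBH, hBnc, hmax⟩ := hB
  obtain ⟨y, hyB, hvy⟩ : ∃ y ∈ B, G.Adj v y := by
    have := hnt.coe_sort
    obtain ⟨y, hy⟩ := hBnc.1.preconnected.exists_adj_of_nontrivial ⟨v, hv⟩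
    exact ⟨y, y.2, hy⟩
  have hwy : w ≠ y := fun h => hwB (h ▸ hyB)
  refine ⟨hBH hv, w, y, ⟨hw, hvw.ne.symm⟩, ⟨hBH hyB, hvy.ne.symm⟩, ?_, fun hreach => ?_⟩
  · exact (show (G.induce H).Adj ⟨w, hw⟩ ⟨v, hBH hv⟩ from hvw.symm).reachable.trans
      (show (G.induce H).Adj ⟨v, hBH hv⟩ ⟨y, hBH hyB⟩ from hvy).reachable
  obtain ⟨p, hp, hpH⟩ := hreach.exists_isPath_of_induce
  have hc := hp.isCycle_cons_concat (fun h => (hpH v h).2 rfl) hvw hvy.symm hwy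
  have hcH : {x | x ∈ (Walk.cons hvw (p.concat hvy.symm)).support} ⊆ H := by
    intro x hx
    rw [Set.mem_ofPred_eq, Walk.support_cons, Walk.support_concat, List.mem_cons,
      List.mem_append, List.mem_singleton] at hx
    rcases hx with rfl | hx | rfl
    · exact hBH hv
    · exact (hpH x hx).1
    · exact hBH hv
  have hbig := hmax _ Set.subset_union_left (Set.union_subset hBH hcH)
    (hBnc.union hc.noCutVertexSet ⟨hv, by simp⟩ ⟨hyB, by simp⟩ hvy.ne)
  exact hwB (hbig ▸ Or.inr (by simp))

theorem IsBlockWithin.mem_of_adj_of_subsingleton {H B : Set V} (hB : IsBlockWithin G H B)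
    (hsub : B.Subsingleton) {v w : V} (hv : v ∈ B) (hw : w ∈ H) (hvw : G.Adj v w) : w ∈ B := by
  have hpair := hB.2.2 {v, w} (fun x hx => hsub hx hv ▸ Set.mem_insert x _)
    (Set.insert_subset (hB.1 hv) (Set.singleton_subset_iff.2 hw)) (noCutVertexSet_pair hvw)
  exact hpair ▸ Or.inr rfl

def innerBoundary (G : SimpleGraph V) (H B : Set V) : Set V :=
  {v ∈ B | ∃ w ∈ H \ B, G.Adj v w}

theorem IsBlockWithin.innerBoundary_eq_empty {H B : Set V} (hB : IsBlockWithin G H B)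
    (hsub : B.Subsingleton) : innerBoundary G H B = ∅ :=
  Set.eq_empty_of_forall_notMem fun _ ⟨hv, _, hw, hvw⟩ =>
    hw.2 (hB.mem_of_adj_of_subsingleton hsub hv hw.1 hvw)

theorem IsLeafBlockWithin.innerBoundary_subsingleton {H B : Set V}
    (hB : IsLeafBlockWithin G H B) : (innerBoundary G H B).Subsingleton := by
  rcases B.subsingleton_or_nontrivial with hsub | hnt
  · exact hsub.anti fun v hv => hv.1
  · exact hB.2.anti fun v ⟨hv, w, hw, hvw⟩ =>
      ⟨hv, hB.1.isCutVertexWithin_of_adj hnt hv hw.1 hw.2 hvw⟩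

theorem ncard_neighborSet_inter_eq [G.LocallyFinite] {r : ℕ} (hreg : G.IsRegularOfDegree r)
    {B S : Set V} (hB : G.IsClique B) (hBS : Disjoint B S) {v : V} (hv : v ∈ B)
    (hN : G.neighborSet v ⊆ B ∪ S) : (G.neighborSet v ∩ S).ncard = r + 1 - B.ncard := by
  have hsplit : G.neighborSet v = (B \ {v}) ∪ (G.neighborSet v ∩ S) := by
    ext x
    refine ⟨fun hx => ?_, ?_⟩
    · rcases hN hx with hxB | hxS
      · exact Or.inl ⟨hxB, (G.ne_of_adj hx).symm⟩
      · exact Or.inr ⟨hx, hxS⟩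
    · rintro (⟨hxB, hxv⟩ | ⟨hx, -⟩)
      · exact hB hv hxB (Ne.symm hxv)
      · exact hx
  have hfin : (B \ {v}).Finite :=
    (G.neighborSet v).toFinite.subset (hsplit ▸ Set.subset_union_left)
  have hB : (B \ {v}).ncard + 1 = B.ncard :=
    Set.ncard_sdiff_singleton_add_one hv (hfin.of_sdiff (Set.finite_singleton v))
  have hdeg : (G.neighborSet v).ncard = r := by
    rw [← hreg v, ← card_neighborSet_eq_degree, ← Nat.card_eq_fintype_card, Nat.card_coe_set_eq]
  have hdisj : Disjoint (B \ {v}) (G.neighborSet v ∩ S) :=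
    (hBS.mono_left Set.sdiff_subset).mono_right Set.inter_subset_right
  rw [hsplit, Set.ncard_union_eq hdisj hfin] at hdeg
  omega

theorem ncard_edges_eq_sum [Fintype V] (B S : Set V) [DecidablePred (· ∈ B)] :
    {e : V × V | e.1 ∈ B ∧ e.2 ∈ S ∧ G.Adj e.1 e.2}.ncard =
      ∑ v ∈ B.toFinset, (G.neighborSet v ∩ S).ncard := by
  classical
  rw [Set.ncard_eq_toFinset_card',
    Finset.card_eq_sum_card_fiberwise (f := Prod.fst) (t := B.toFinset) (fun e he => by simp_all)]
  refine Finset.sum_congr rfl fun v hv => ?_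
  rw [← Set.ncard_coe_finset,
    ← Set.ncard_image_of_injective (G.neighborSet v ∩ S) (Prod.mk_right_injective v)]
  congr 1
  ext ⟨a, b⟩
  have := Set.mem_toFinset.mp hv
  simp only [Finset.coe_filter, Set.mem_image, Set.mem_ofPred_eq, Set.mem_inter_iff,
    mem_neighborSet, Prod.mk.injEq]
  grind

theorem ncard_sdiff_innerBoundary_mul_le [Fintype V] [G.LocallyFinite] {r : ℕ}
    (hreg : G.IsRegularOfDegree r) {S H B : Set V} (hHS : Disjoint H S)
    (hUnion : ∀ x ∈ H, ∀ y, y ∉ S → G.Adj x y → y ∈ H) (hBH : B ⊆ H) (hB : G.IsClique B) :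
    (B \ innerBoundary G H B).ncard * (r + 1 - B.ncard) ≤
      {e : V × V | e.1 ∈ B ∧ e.2 ∈ S ∧ G.Adj e.1 e.2}.ncard := by
  classical
  have hN : ∀ v ∈ B \ innerBoundary G H B, G.neighborSet v ⊆ B ∪ S := by
    intro v hv x hx
    by_cases hxS : x ∈ S
    · exact Or.inr hxS
    · exact Or.inl (by_contra fun hxB =>
        hv.2 ⟨hv.1, x, ⟨hUnion v (hBH hv.1) x hxS hx, hxB⟩, hx⟩)
  rw [ncard_edges_eq_sum, Set.ncard_eq_toFinset_card', ← smul_eq_mul, ← Finset.sum_const]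
  calc ∑ _ ∈ (B \ innerBoundary G H B).toFinset, (r + 1 - B.ncard)
      = ∑ v ∈ (B \ innerBoundary G H B).toFinset, (G.neighborSet v ∩ S).ncard :=
        Finset.sum_congr rfl fun v hv => (ncard_neighborSet_inter_eq hreg hB (hHS.mono_left hBH)
          (Set.mem_toFinset.mp hv).1 (hN v (Set.mem_toFinset.mp hv))).symm
    _ ≤ ∑ v ∈ B.toFinset, (G.neighborSet v ∩ S).ncard :=
        Finset.sum_le_sum_of_subset (Set.toFinset_subset_toFinset.mpr Set.sdiff_subset)

end

theorem Nat.sub_one_le_mul_sub_add_one {p r : ℕ} (hp : 2 ≤ p) (hpr : p ≤ r) :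
    r - 1 ≤ (p - 1) * (r - p + 1) := by
  obtain ⟨a, rfl⟩ := Nat.exists_eq_add_of_le hp
  obtain ⟨b, rfl⟩ := Nat.exists_eq_add_of_le hpr
  -- `(p - 1) * (r - p + 1) - (r - 1) = (p - 2) * (r - p)`
  rw [show 2 + a + b - 1 = (a + 1) + b by omega, show 2 + a - 1 = a + 1 by omega,
    Nat.add_sub_cancel_left]
  nlinarith

theorem leaf_block_edges_to_S_general (G : SimpleGraph V) [DecidableRel G.Adj]
    (r : ℕ) (hreg : G.IsRegularOfDegree r)
    (S H : Set V) (hHS : Disjoint H S)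
    (hUnion : ∀ x ∈ H, ∀ y, y ∉ S → G.Adj x y → y ∈ H)
    (B : Set V) (hleaf : IsLeafBlockWithin G H B)
    (p : ℕ) (hp1 : 1 ≤ p) (hpr : p ≤ r)
    (hBccard : B.ncard = p) (hBcomplete : ∀ u ∈ B, ∀ v ∈ B, u ≠ v → G.Adj u v) :
    (p - 1) * (r - p + 1) ≤ {e : V × V | e.1 ∈ B ∧ e.2 ∈ S ∧ G.Adj e.1 e.2}.ncard ∧
      r - 1 ≤ {e : V × V | e.1 ∈ B ∧ e.2 ∈ S ∧ G.Adj e.1 e.2}.ncard := by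
  have hcount := ncard_sdiff_innerBoundary_mul_le hreg hHS hUnion hleaf.1.1 hBcomplete
  rw [hBccard] at hcount
  rcases hp1.eq_or_lt with rfl | hp2
  · have hsub : B.Subsingleton := Set.ncard_le_one_iff_subsingleton.mp hBccard.le
    rw [hleaf.1.innerBoundary_eq_empty hsub, Set.sdiff_empty, hBccard] at hcount
    omega
  · have hD : p - 1 ≤ (B \ innerBoundary G H B).ncard := by
      have := Set.ncard_le_one_iff_subsingleton.mpr hleaf.innerBoundary_subsingleton
      have := Set.ncard_le_ncard_sdiff_add_ncard B (innerBoundary G H B)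
      omega
    rw [show r + 1 - p = r - p + 1 by omega] at hcount
    have hmain := (Nat.mul_le_mul_right (r - p + 1) hD).trans hcount
    exact ⟨hmain, (Nat.sub_one_le_mul_sub_add_one hp2 hpr).trans hmain⟩

/-- in an r-regular graph, if H is a union of components of G - S all of
whose blocks are odd complete graphs, and B is a leaf block of the subgraph induced on H
with B ≅ K_p, 1 ≤ p ≤ r, then the number of edges of G joining B to S is at least
(p-1)(r-p+1), and in particular at least r-1. -/
theorem leaf_block_edges_to_S (G : SimpleGraph V) [DecidableRel G.Adj]
    (r : ℕ) (hreg : G.IsRegularOfDegree r)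
    (S H : Set V) (hHS : Disjoint H S)
    (hUnion : ∀ x ∈ H, ∀ y, y ∉ S → G.Adj x y → y ∈ H)
    (hbad : ∀ B, IsBlockWithin G H B → IsOddComplete G B)
    (B : Set V) (hleaf : IsLeafBlockWithin G H B)
    (p : ℕ) (hp1 : 1 ≤ p) (hpr : p ≤ r)
    (hBccard : B.ncard = p) (hBcomplete : ∀ u ∈ B, ∀ v ∈ B, u ≠ v → G.Adj u v) :
    (p - 1) * (r - p + 1) ≤ {e : V × V | e.1 ∈ B ∧ e.2 ∈ S ∧ G.Adj e.1 e.2}.ncard ∧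
      r - 1 ≤ {e : V × V | e.1 ∈ B ∧ e.2 ∈ S ∧ G.Adj e.1 e.2}.ncard :=
  leaf_block_edges_to_S_general G r hreg S H hHS hUnion B hleaf p hp1 hpr hBccard hBcomplete
end

section
/- Let G be a connected graph every block of which is a complete graph of odd order. Then G has no IPD. -/
open SimpleGraph

variable {V : Type*} [Fintype V]

/-
Induct on the connected vertex set `H`. If `H` has no cut vertex it is a block, hence an odd
clique. Otherwise pick, over all cut vertices `c`, a smallest component `C` of `H - c`; no vertex
of `C` is a cut vertex, so `C ∪ {c}` is a leaf block, again an odd clique, and `C` is joined to the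
rest only through `c`. An induced path meets a clique in at most one edge, so the path through a
vertex of `C` has that vertex as an end and turns around after one edge. As `|C|` is even, the path
through `c` cannot enter `C` (it would leave an odd number of vertices of `C` to be paired up), so
the paths meeting `C` are single edges inside `C`. Dropping them leaves an IPD of `H - C`, which is
connected and whose blocks are blocks of `H`. In the base case the path through any vertex `c`
would have to enter the even set `H - c`, which is impossible for the same reason.
-/

section Reachability

variable {W : Type*} {G : SimpleGraph W} {H H' S X : Set W} {a b c v x y z : W}

/-- Walks of `G` inside `H`. The empty walk counts, so `ReachIn G H x x` holds even when
`x ∉ H`. -/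
abbrev ReachIn (G : SimpleGraph W) (H : Set W) : W → W → Prop :=
  Relation.ReflTransGen fun a b => a ∈ H ∧ b ∈ H ∧ G.Adj a b

def ConnectedIn (G : SimpleGraph W) (H : Set W) : Prop :=
  ∀ x ∈ H, ∀ y ∈ H, ReachIn G H x y

namespace ReachIn

theorem refl : ReachIn G H x x := Relation.ReflTransGen.refl

theorem trans (h₁ : ReachIn G H x y) (h₂ : ReachIn G H y z) : ReachIn G H x z :=
  Relation.ReflTransGen.trans h₁ h₂

theorem single (hx : x ∈ H) (hy : y ∈ H) (h : G.Adj x y) : ReachIn G H x y :=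
  Relation.ReflTransGen.single ⟨hx, hy, h⟩

theorem symm (h : ReachIn G H x y) : ReachIn G H y x := by
  induction h with
  | refl => exact refl
  | tail _ hs ih => exact (single hs.2.1 hs.1 hs.2.2.symm).trans ih

theorem mono (hH : H ⊆ H') (h : ReachIn G H x y) : ReachIn G H' x y :=
  Relation.ReflTransGen.mono (fun _ _ hs => ⟨hH hs.1, hH hs.2.1, hs.2.2⟩) _ _ h

theorem eq_or_mem (h : ReachIn G H x y) : x = y ∨ x ∈ H := by
  induction h using Relation.ReflTransGen.head_induction_on with
  | refl => exact .inl rfl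
  | head hs _ _ => exact .inr hs.1

/-- A walk to `c` either avoids `v` or meets `v` before `c`. -/
theorem avoid_or_avoid (hvc : v ≠ c) (h : ReachIn G H z c) :
    ReachIn G (H \ {v}) z c ∨ ReachIn G (H \ {c}) z v := by
  induction h using Relation.ReflTransGen.head_induction_on with
  | refl => exact .inl refl
  | @head a a' hs _ ih =>
    rcases ih with h | h
    · by_cases hav : a = v
      · exact .inr (hav ▸ refl)
      · have ha' : a' ≠ v := by
          rintro rfl
          exact (h.eq_or_mem.resolve_left hvc).2 rfl
        exact .inl ((single (H := H \ {v}) ⟨hs.1, hav⟩ ⟨hs.2.1, ha'⟩ hs.2.2).trans h)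
    · by_cases hac : a = c
      · exact .inl (hac ▸ refl)
      · have ha' : a' ≠ c := by
          rintro rfl
          exact (h.eq_or_mem.resolve_left hvc.symm).2 rfl
        exact .inr ((single (H := H \ {c}) ⟨hs.1, hac⟩ ⟨hs.2.1, ha'⟩ hs.2.2).trans h)

/-- Collapse `X` onto `c`. -/
theorem diff (hX : ∀ t ∈ X, ∀ s ∈ H, G.Adj t s → s ∈ X ∨ s = c) (hc : c ∈ H) (hcX : c ∉ X)
    (h : ReachIn G H a b) (ha : a ∉ X) (hb : b ∉ X) : ReachIn G (H \ X) a b := by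
  classical
  let f : W → W := fun t => if t ∈ X then c else t
  have hf : ∀ t ∉ X, f t = t := fun t ht => if_neg ht
  have step : ∀ p ∈ H, ∀ q ∈ H, G.Adj p q → ReachIn G (H \ X) (f p) (f q) := by
    intro p hp q hq hpq
    by_cases hpX : p ∈ X <;> by_cases hqX : q ∈ X
    · simp only [f, if_pos hpX, if_pos hqX]; exact refl
    · obtain rfl := (hX p hpX q hq hpq).resolve_left hqX
      simp only [f, if_pos hpX, if_neg hqX]; exact refl
    · obtain rfl := (hX q hqX p hp hpq.symm).resolve_left hpX
      simp only [f, if_pos hqX, if_neg hpX]; exact refl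
    · rw [hf p hpX, hf q hqX]; exact single ⟨hp, hpX⟩ ⟨hq, hqX⟩ hpq
  have key : ReachIn G (H \ X) (f a) (f b) :=
    h.lift' f fun p q hs => step p hs.1 q hs.2.1 hs.2.2
  rwa [hf a ha, hf b hb] at key

end ReachIn

theorem connectedIn_of_subsingleton (h : S.Subsingleton) : ConnectedIn G S :=
  fun _ hx _ hy => h hx hy ▸ ReachIn.refl

theorem SimpleGraph.Preconnected.connectedIn_univ (h : G.Preconnected) :
    ConnectedIn G Set.univ := fun x _ y _ =>
  Relation.ReflTransGen.mono (fun _ _ hxy => ⟨trivial, trivial, hxy⟩) _ _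
    ((reachable_iff_reflTransGen x y).1 (h x y))

theorem ReachIn.induce_reachable (h : ReachIn G H x y) (hx : x ∈ H) (hy : y ∈ H) :
    (G.induce H).Reachable ⟨x, hx⟩ ⟨y, hy⟩ := by
  induction h with
  | refl => exact .rfl
  | tail _ hs ih => exact (ih hs.1).trans (Adj.reachable (by simpa using hs.2.2))

theorem induce_reachable_iff_reachIn {x y : H} :
    (G.induce H).Reachable x y ↔ ReachIn G H x y := by
  refine ⟨?_, fun h => h.induce_reachable x.2 y.2⟩
  rintro ⟨p⟩
  induction p with
  | nil => exact ReachIn.refl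
  | cons h _ ih =>
    exact (ReachIn.single (Subtype.prop _) (Subtype.prop _) (by simpa using h)).trans ih

theorem induce_preconnected_iff_connectedIn : (G.induce H).Preconnected ↔ ConnectedIn G H :=
  ⟨fun h x hx y hy => induce_reachable_iff_reachIn.1 (h ⟨x, hx⟩ ⟨y, hy⟩),
    fun h x y => induce_reachable_iff_reachIn.2 (h x x.2 y y.2)⟩

theorem noCutVertexSet_iff {B : Set W} : NoCutVertexSet G B ↔
    B.Nonempty ∧ ConnectedIn G B ∧ ∀ v ∈ B, ConnectedIn G (B \ {v}) := by
  simp only [NoCutVertexSet, connected_iff, induce_preconnected_iff_connectedIn,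
    Set.nonempty_coe_sort]
  tauto

theorem noCutVertexSet_pair_s10 (h : G.Adj x y) : NoCutVertexSet G {x, y} := by
  have hxy := G.ne_of_adj h
  refine noCutVertexSet_iff.2 ⟨Set.insert_nonempty _ _, ?_, ?_⟩
  · rintro a (rfl | rfl) b (rfl | rfl)
    exacts [.refl, .single (by simp) (by simp) h, .single (by simp) (by simp) h.symm, .refl]
  · rintro v (rfl | rfl) <;> apply connectedIn_of_subsingleton
    · rw [Set.pair_sdiff_left hxy]; exact Set.subsingleton_singleton
    · rw [Set.pair_sdiff_right hxy]; exact Set.subsingleton_singleton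

end Reachability

section Blocks

variable {W : Type*} {G : SimpleGraph W} {H S B : Set W} {a c v x y z : W}

/-- The component of `G[S]` through `x`; empty when `x ∉ S`. -/
def componentIn (G : SimpleGraph W) (S : Set W) (x : W) : Set W :=
  {z | z ∈ S ∧ ReachIn G S x z}

theorem componentIn_subset : componentIn G S x ⊆ S := fun _ hz => hz.1

theorem mem_componentIn_self (hx : x ∈ S) : x ∈ componentIn G S x := ⟨hx, .refl⟩

theorem mem_componentIn_of_adj (hz : z ∈ componentIn G S x) (hy : y ∈ S) (h : G.Adj z y) :
    y ∈ componentIn G S x :=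
  ⟨hy, hz.2.trans (.single hz.1 hy h)⟩

theorem connectedIn_componentIn : ConnectedIn G (componentIn G S x) := by
  have lift : ∀ a ∈ componentIn G S x, ∀ b, ReachIn G S a b →
      ReachIn G (componentIn G S x) a b := by
    intro a ha b hab
    induction hab with
    | refl => exact .refl
    | tail hr hs ih =>
      have hq := mem_componentIn_of_adj ⟨hs.1, ha.2.trans hr⟩ hs.2.1 hs.2.2
      exact ih.trans (.single ⟨hs.1, ha.2.trans hr⟩ hq hs.2.2)
  intro a ha b hb
  have hx : x ∈ componentIn G S x :=
    mem_componentIn_self (ha.2.eq_or_mem.elim (· ▸ ha.1) id)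
  exact (lift x hx a ha.2).symm.trans (lift x hx b hb.2)

theorem isBlockWithin_self (hH : H.Nonempty) (hconn : ConnectedIn G H)
    (hcut : ∀ c ∈ H, ConnectedIn G (H \ {c})) : IsBlockWithin G H H :=
  ⟨subset_rfl, noCutVertexSet_iff.2 ⟨hH, hconn, hcut⟩, fun _ h₁ h₂ _ => h₂.antisymm h₁⟩

theorem IsBlockWithin.not_adj_of_eq_singleton (hB : IsBlockWithin G H {c}) (hz : z ∈ H) :
    ¬ G.Adj c z := fun h => by
  have hpair := hB.2.2 {c, z} (by simp) (Set.insert_subset (hB.1 rfl) (by simpa))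
    (noCutVertexSet_pair_s10 h)
  exact G.ne_of_adj h (Eq.symm (by simpa using hpair.le (Set.mem_insert_of_mem c rfl)))

/-- Removing `c` does not disconnect `B`, so `B - c` stays inside one component of `H - c`. -/
theorem NoCutVertexSet.subset_or_disjoint_componentIn (hB : NoCutVertexSet G B) (hBH : B ⊆ H) :
    B ⊆ insert c (componentIn G (H \ {c}) x) ∨ Disjoint B (componentIn G (H \ {c}) x) := by
  rw [or_iff_not_imp_right, Set.not_disjoint_iff]
  rintro ⟨z, hzB, hzC⟩ w hwB
  by_contra hw
  obtain ⟨hwc, hwC⟩ : w ≠ c ∧ w ∉ componentIn G (H \ {c}) x := by simpa using hw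
  obtain ⟨-, hBconn, hBcut⟩ := noCutVertexSet_iff.1 hB
  have hzw : ReachIn G (B \ {c}) z w := by
    by_cases hcB : c ∈ B
    · exact hBcut c hcB z ⟨hzB, (hzC.1.2 ·)⟩ w ⟨hwB, hwc⟩
    · exact (hBconn z hzB w hwB).mono fun t ht => ⟨ht, fun h => hcB (h ▸ ht)⟩
  exact hwC ⟨⟨hBH hwB, hwc⟩, hzC.2.trans (hzw.mono (Set.sdiff_subset_sdiff_left hBH))⟩

theorem connectedIn_diff_componentIn (hH : ConnectedIn G H) (hc : c ∈ H) :
    ConnectedIn G (H \ componentIn G (H \ {c}) x) := by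
  refine fun a ha b hb => (hH a ha.1 b hb.1).diff (fun t ht s hs hts => ?_) hc
    (fun h => h.1.2 rfl) ha.2 hb.2
  by_cases hsc : s = c
  · exact .inr hsc
  · exact .inl (mem_componentIn_of_adj ht ⟨hs, hsc⟩ hts)

theorem IsBlockWithin.of_diff_componentIn (hH : ConnectedIn G H) (hc : c ∈ H)
    (hy : y ∈ H \ {c}) (hyC : y ∉ componentIn G (H \ {c}) x)
    (hB : IsBlockWithin G (H \ componentIn G (H \ {c}) x) B) : IsBlockWithin G H B := by
  refine ⟨hB.1.trans Set.sdiff_subset, hB.2.1, fun B' hBB' hB'H hB' => ?_⟩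
  rcases hB'.subset_or_disjoint_componentIn (c := c) (x := x) hB'H with hsub | hdisj
  · exfalso
    have hBc : B = {c} := by
      refine (noCutVertexSet_iff.1 hB.2.1).1.subset_singleton_iff.1 fun t ht => ?_
      exact (hsub (hBB' ht)).resolve_right (hB.1 ht).2
    have hcy : ReachIn G (H \ componentIn G (H \ {c}) x) c y :=
      connectedIn_diff_componentIn hH hc c ⟨hc, fun h => h.1.2 rfl⟩ y ⟨hy.1, hyC⟩
    obtain hcy | ⟨z, ⟨-, hz, hcz⟩, -⟩ := hcy.cases_head
    · exact hy.2 hcy.symm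
    · exact (hBc ▸ hB).not_adj_of_eq_singleton hz hcz
  · exact hB.2.2 B' hBB' (fun t ht => ⟨hB'H ht, hdisj.notMem_of_mem_left ht⟩) hB'

theorem isBlockWithin_insert_componentIn (hH : ConnectedIn G H) (hc : c ∈ H) (hx : x ∈ H \ {c})
    (hleaf : ∀ v ∈ componentIn G (H \ {c}) x, ConnectedIn G (H \ {v})) :
    IsBlockWithin G H (insert c (componentIn G (H \ {c}) x)) := by
  set C := componentIn G (H \ {c}) x
  have hcC : c ∉ C := fun h => h.1.2 rfl
  have hBH : insert c C ⊆ H := Set.insert_subset hc (componentIn_subset.trans Set.sdiff_subset)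
  have hout : ∀ t ∈ H \ insert c C, ∀ s ∈ H, G.Adj t s → s ∈ H \ insert c C ∨ s = c := by
    intro t ht s hs hts
    by_contra! h
    have hsC : s ∈ C := by simpa [h.2, hs] using h.1
    exact ht.2 (.inr (mem_componentIn_of_adj hsC ⟨ht.1, fun htc => ht.2 (.inl htc)⟩ hts.symm))
  have hcut : ∀ v ∈ insert c C, ConnectedIn G (insert c C \ {v}) := by
    rintro v (rfl | hvC)
    · rw [Set.insert_sdiff_self_of_notMem hcC]
      exact connectedIn_componentIn
    · have hvc : v ≠ c := hvC.1.2
      intro a ha b hb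
      have hab : ReachIn G (H \ {v}) a b := hleaf v hvC a ⟨hBH ha.1, ha.2⟩ b ⟨hBH hb.1, hb.2⟩
      have hc' : c ∈ H \ {v} := ⟨hc, hvc.symm⟩
      refine (hab.diff (X := H \ insert c C) (fun t ht s hs => hout t ht s hs.1) hc'
        (fun h => h.2 (.inl rfl)) (fun h => h.2 ha.1) (fun h => h.2 hb.1)).mono
        fun t ht => ⟨?_, ht.1.2⟩
      exact by_contra fun h => ht.2 ⟨ht.1.1, h⟩
  have hconn : ConnectedIn G (insert c C) := fun a ha b hb =>
    ((hH a (hBH ha) b (hBH hb)).diff hout hc (fun h => h.2 (.inl rfl)) (fun h => h.2 ha)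
      (fun h => h.2 hb)).mono fun t ht => by_contra fun h => ht.2 ⟨ht.1, h⟩
  refine ⟨hBH, noCutVertexSet_iff.2 ⟨⟨c, .inl rfl⟩, hconn, hcut⟩, fun B' hBB' hB'H hB' => ?_⟩
  rcases hB'.subset_or_disjoint_componentIn (c := c) (x := x) hB'H with hsub | hdisj
  · exact hsub.antisymm hBB'
  · exact absurd (mem_componentIn_self hx)
      (hdisj.notMem_of_mem_left (hBB' (.inr (mem_componentIn_self hx))))

theorem componentIn_subset_of_not_reachIn (hH : ConnectedIn G H) (hc : c ∈ H)
    (hv : v ∈ componentIn G (H \ {c}) x) (ha : ¬ ReachIn G (H \ {v}) a c) :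
    componentIn G (H \ {v}) a ⊆ componentIn G (H \ {c}) x \ {v} := by
  rintro z ⟨hz, haz⟩
  rcases (hH z hz.1 c hc).avoid_or_avoid hv.1.2 with h | h
  · exact absurd (haz.trans h) ha
  · have hzc : z ≠ c := by
      rintro rfl
      exact ha haz
    exact ⟨⟨⟨hz.1, hzc⟩, hv.2.trans h.symm⟩, hz.2⟩

/-- Take `C` of least size: were `v ∈ C` a cut vertex of `H`, a component of `H - v` missing `c`
would be a smaller one, inside `C - v`. -/
theorem exists_componentIn_forall_connectedIn [Finite W] (hH : ConnectedIn G H) (hc : c ∈ H)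
    (hcut : ¬ ConnectedIn G (H \ {c})) :
    ∃ c ∈ H, ∃ x ∈ H \ {c}, ∃ y ∈ H \ {c}, y ∉ componentIn G (H \ {c}) x ∧
      ∀ v ∈ componentIn G (H \ {c}) x, ConnectedIn G (H \ {v}) := by
  set s := {p : W × W | p.1 ∈ H ∧ p.2 ∈ H \ {p.1} ∧
    ∃ y ∈ H \ {p.1}, y ∉ componentIn G (H \ {p.1}) p.2}
  have hs : s.Nonempty := by
    simp only [ConnectedIn, not_forall] at hcut
    obtain ⟨a, ha, b, hb, hab⟩ := hcut
    exact ⟨(c, a), hc, ha, b, hb, fun h => hab h.2⟩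
  obtain ⟨⟨c, x⟩, ⟨hc, hx, y, hy, hyC⟩, hmin⟩ :=
    s.exists_min_image (fun p => (componentIn G (H \ {p.1}) p.2).ncard) s.toFinite hs
  refine ⟨c, hc, x, hx, y, hy, hyC, fun v hv => ?_⟩
  by_contra hvcut
  obtain ⟨a, ha, hac⟩ : ∃ a ∈ H \ {v}, ¬ ReachIn G (H \ {v}) a c := by
    simp only [ConnectedIn, not_forall] at hvcut
    obtain ⟨a, ha, b, hb, hab⟩ := hvcut
    by_cases h : ReachIn G (H \ {v}) a c
    · exact ⟨b, hb, fun hbc => hab (h.trans hbc.symm)⟩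
    · exact ⟨a, ha, h⟩
  have hle := hmin (v, a) ⟨hv.1.1, ha, c, ⟨hc, Ne.symm hv.1.2⟩, fun h => hac h.2⟩
  have hlt := Set.ncard_lt_ncard ((componentIn_subset_of_not_reachIn hH hc hv hac).trans_ssubset
    (Set.sdiff_singleton_ssubset.2 hv))
  exact (hle.trans_lt hlt).false

end Blocks

theorem pathGraph_eq_two_of_adj {n : ℕ} {i j : Fin n} (hij : (pathGraph n).Adj i j)
    (hi : ∀ k, (pathGraph n).Adj i k → k = j) (hj : ∀ k, (pathGraph n).Adj j k → k = i) :
    n = 2 := by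
  wlog h : i.val + 1 = j.val generalizing i j
  · exact this hij.symm hj hi (by rw [pathGraph_adj] at hij; omega)
  have hj0 : j.val + 1 = n := by
    by_contra hne
    have := congrArg Fin.val (hj ⟨j.val + 1, by omega⟩ (pathGraph_adj.2 (.inl rfl)))
    simp only at this
    omega
  have hi0 : i.val = 0 := by
    by_contra hne
    have hk : (pathGraph n).Adj i ⟨i.val - 1, by omega⟩ :=
      pathGraph_adj.2 (.inr (by simp only; omega))
    have := congrArg Fin.val (hi _ hk)
    simp only at this
    omega
  omega

section InducedPaths

variable {W : Type*} {G : SimpleGraph W} {P K : Set W} {n : ℕ} {u v w : W}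

theorem IsInducedPathOn.exists_adj (h : IsInducedPathOn G P n) (hn : 2 ≤ n) (hv : v ∈ P) :
    ∃ w ∈ P, G.Adj v w := by
  obtain ⟨e⟩ := h
  obtain ⟨j, hj⟩ : ∃ j, (pathGraph n).Adj (e ⟨v, hv⟩) j := by
    by_cases h0 : (e ⟨v, hv⟩).val = 0
    · exact ⟨⟨1, by omega⟩, pathGraph_adj.2 (.inl (by simp [h0]))⟩
    · exact ⟨⟨(e ⟨v, hv⟩).val - 1, by omega⟩, pathGraph_adj.2 (.inr (by simp only; omega))⟩
  rw [← e.apply_symm_apply j, e.map_adj_iff] at hj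
  exact ⟨e.symm j, (e.symm j).2, by simpa using hj⟩

theorem IsInducedPathOn.not_adj_of_adj (h : IsInducedPathOn G P n) (hu : u ∈ P) (hv : v ∈ P)
    (hw : w ∈ P) (huv : G.Adj u v) (huw : G.Adj u w) : ¬ G.Adj v w := fun hvw => by
  obtain ⟨e⟩ := h
  have adj : ∀ {a b : W} (ha : a ∈ P) (hb : b ∈ P), G.Adj a b →
      (e ⟨a, ha⟩).val + 1 = (e ⟨b, hb⟩).val ∨ (e ⟨b, hb⟩).val + 1 = (e ⟨a, ha⟩).val :=
    fun ha hb hab => pathGraph_adj.1 (e.map_adj_iff.2 (by simpa using hab))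
  have := adj hu hv huv
  have := adj hu hw huw
  have := adj hv hw hvw
  omega

theorem IsInducedPathOn.eq_pair (h : IsInducedPathOn G P n) (hv : v ∈ P) (hw : w ∈ P)
    (hvw : G.Adj v w) (hv' : ∀ u ∈ P, G.Adj v u → u = w) (hw' : ∀ u ∈ P, G.Adj w u → u = v) :
    P = {v, w} := by
  obtain ⟨e⟩ := h
  have nbr : ∀ {a b : W} (ha : a ∈ P) (hb : b ∈ P), (∀ u ∈ P, G.Adj a u → u = b) →
      ∀ k, (pathGraph n).Adj (e ⟨a, ha⟩) k → k = e ⟨b, hb⟩ := fun {a b} ha hb hab k hk => by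
    rw [← e.apply_symm_apply k, e.map_adj_iff] at hk
    have hu : e.symm k = ⟨b, hb⟩ := Subtype.ext (hab _ (e.symm k).2 (by simpa using hk))
    rw [← hu, e.apply_symm_apply]
  have hn := pathGraph_eq_two_of_adj (e.map_adj_iff.2 (by simpa using hvw)) (nbr hv hw hv')
    (nbr hw hv hw')
  have hcard : P.ncard = 2 := by
    rw [← Nat.card_coe_set_eq, Nat.card_congr e.toEquiv, Nat.card_eq_fintype_card,
      Fintype.card_fin, hn]
  refine (Set.eq_of_subset_of_ncard_le (Set.insert_subset hv (by simpa)) ?_ ?_).symm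
  · rw [hcard, Set.ncard_pair (G.ne_of_adj hvw)]
  · exact Set.finite_of_ncard_pos (by omega)

/-- A third vertex of `P ∩ K` would close a triangle in `P`. -/
theorem IsInducedPathOn.exists_adj_inter_subset (h : IsInducedPathOn G P n) (hn : 2 ≤ n)
    (hK : G.IsClique K) (hv : v ∈ P) (hvK : v ∈ K) (hN : ∀ u ∈ P, G.Adj v u → u ∈ K) :
    ∃ w ∈ P, G.Adj v w ∧ P ∩ K ⊆ {v, w} := by
  obtain ⟨w, hw, hvw⟩ := h.exists_adj hn hv
  refine ⟨w, hw, hvw, fun u ⟨huP, huK⟩ => ?_⟩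
  by_contra! hu
  simp only [Set.mem_insert_iff, Set.mem_singleton_iff, not_or] at hu
  exact h.not_adj_of_adj hv huP hw (hK hvK huK (Ne.symm hu.1)) hvw
    (hK huK (hN w hw hvw) hu.2)

end InducedPaths

section Cover

variable {W : Type*} {G : SimpleGraph W} {H C : Set W} {D : Set (Set W)} {P Q : Set W} {c v : W}

theorem even_ncard_of_existsUnique [Finite W] {S : Set W} {r : W → W → Prop}
    (hr : ∀ u w, r u w → r w u) (h : ∀ v ∈ S, ∃! w, w ∈ S ∧ w ≠ v ∧ r v w) : Even S.ncard := by
  classical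
  have := Fintype.ofFinite W
  let M : (⊤ : SimpleGraph W).Subgraph :=
    { verts := S
      Adj := fun u w => u ∈ S ∧ w ∈ S ∧ w ≠ u ∧ r u w
      adj_sub := fun huw => huw.2.2.1.symm
      edge_vert := fun huw => huw.1
      symm := ⟨fun _ _ huw => ⟨huw.2.1, huw.1, huw.2.2.1.symm, hr _ _ huw.2.2.2⟩⟩ }
  have hM : M.IsMatching := fun v hv => by
    obtain ⟨w, hw, huniq⟩ := h v hv
    exact ⟨w, ⟨hv, hw⟩, fun w' hw' => huniq w' hw'.2⟩
  simpa [M, Set.ncard_eq_toFinset_card'] using hM.even_card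

/-- `D` is an IPD of `G[H]`. -/
structure IsInducedPathCover (G : SimpleGraph W) (H : Set W) (D : Set (Set W)) : Prop where
  sUnion_eq : ⋃₀ D = H
  pairwiseDisjoint : D.PairwiseDisjoint id
  isInducedPathOn : ∀ P ∈ D, ∃ n, 2 ≤ n ∧ IsInducedPathOn G P n

/-- What the argument uses of a leaf block `C ∪ {c}` of `G[H]` with cut vertex `c`. -/
structure IsOddCliqueLeaf (G : SimpleGraph W) (H C : Set W) (c : W) : Prop where
  notMem : c ∉ C
  subset : insert c C ⊆ H
  isOddComplete : IsOddComplete G (insert c C)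
  mem_of_adj : ∀ v ∈ C, ∀ u ∈ H, G.Adj v u → u ∈ insert c C

namespace IsInducedPathCover

theorem subset (hD : IsInducedPathCover G H D) (hP : P ∈ D) : P ⊆ H :=
  hD.sUnion_eq ▸ Set.subset_sUnion_of_mem hP

theorem exists_mem (hD : IsInducedPathCover G H D) (hv : v ∈ H) : ∃ P ∈ D, v ∈ P :=
  Set.mem_sUnion.1 (hD.sUnion_eq ▸ hv)

theorem eq_of_mem (hD : IsInducedPathCover G H D) (hP : P ∈ D) (hQ : Q ∈ D) (hvP : v ∈ P)
    (hvQ : v ∈ Q) : P = Q :=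
  hD.pairwiseDisjoint.elim_set hP hQ v hvP hvQ

theorem diff (hD : IsInducedPathCover G H D) (hC : ∀ P ∈ D, ∀ v ∈ P, v ∈ C → P ⊆ C) :
    IsInducedPathCover G (H \ C) {P ∈ D | Disjoint P C} where
  sUnion_eq := by
    ext t
    refine ⟨fun ⟨P, ⟨hP, hPC⟩, htP⟩ => ⟨hD.subset hP htP, hPC.notMem_of_mem_left htP⟩, ?_⟩
    rintro ⟨htH, htC⟩
    obtain ⟨P, hP, htP⟩ := hD.exists_mem htH
    exact ⟨P, ⟨hP, Set.disjoint_left.2 fun v hvP hvC => htC (hC P hP v hvP hvC htP)⟩, htP⟩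
  pairwiseDisjoint := hD.pairwiseDisjoint.subset fun _ hP => hP.1
  isInducedPathOn P hP := hD.isInducedPathOn P hP.1

end IsInducedPathCover

namespace IsOddCliqueLeaf

theorem exists_adj_inter_subset (hL : IsOddCliqueLeaf G H C c) (hD : IsInducedPathCover G H D)
    (hP : P ∈ D) (hvP : v ∈ P) (hvC : v ∈ C) :
    ∃ w ∈ P, G.Adj v w ∧ P ∩ insert c C ⊆ {v, w} := by
  obtain ⟨n, hn, hpath⟩ := hD.isInducedPathOn P hP
  exact hpath.exists_adj_inter_subset hn hL.isOddComplete.2 hvP (.inr hvC)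
    fun u hu => hL.mem_of_adj v hvC u (hD.subset hP hu)

/-- Otherwise the paths would pair up the odd number of vertices of `C \ {v}`. -/
theorem notMem_of_mem [Finite W] (hL : IsOddCliqueLeaf G H C c) (hD : IsInducedPathCover G H D)
    (hP : P ∈ D) (hvP : v ∈ P) (hvC : v ∈ C) : c ∉ P := by
  intro hcP
  have hpair : ∀ u ∈ C \ {v}, ∃! w, w ∈ C \ {v} ∧ w ≠ u ∧ ∃ Q ∈ D, u ∈ Q ∧ w ∈ Q := by
    rintro u ⟨huC, huv⟩
    obtain ⟨Q, hQ, huQ⟩ := hD.exists_mem (hL.subset (.inr huC))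
    obtain ⟨w, hwQ, huw, hQK⟩ := hL.exists_adj_inter_subset hD hQ huQ huC
    have hQP : Q ≠ P := by
      rintro rfl
      have hcw := (hQK ⟨hcP, .inl rfl⟩).resolve_left fun h => hL.notMem (h ▸ huC)
      have hvw := (hQK ⟨hvP, .inr hvC⟩).resolve_left (Ne.symm huv)
      exact hL.notMem ((hcw.trans hvw.symm) ▸ hvC)
    have hwK := hL.mem_of_adj u huC w (hD.subset hQ hwQ) huw
    have hwc : w ≠ c := fun h => hQP (hD.eq_of_mem hQ hP (h ▸ hwQ) hcP)
    have hwv : w ≠ v := fun h => hQP (hD.eq_of_mem hQ hP (h ▸ hwQ) hvP)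
    refine ⟨w, ⟨⟨hwK.resolve_left hwc, hwv⟩, (G.ne_of_adj huw).symm, Q, hQ, huQ, hwQ⟩, ?_⟩
    rintro w' ⟨⟨hw'C, -⟩, hw'u, Q', hQ', huQ', hw'Q'⟩
    obtain rfl := hD.eq_of_mem hQ' hQ huQ' huQ
    exact (hQK ⟨hw'Q', .inr hw'C⟩).resolve_left hw'u
  obtain ⟨k, hk⟩ := even_ncard_of_existsUnique (fun _ _ ⟨Q, hQ, hu, hw⟩ => ⟨Q, hQ, hw, hu⟩) hpair
  obtain ⟨m, hm⟩ := hL.isOddComplete.1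
  rw [Set.ncard_insert_of_notMem hL.notMem, ← Set.ncard_sdiff_singleton_add_one hvC] at hm
  omega

theorem subset_of_mem [Finite W] (hL : IsOddCliqueLeaf G H C c)
    (hD : IsInducedPathCover G H D) (hP : P ∈ D) (hvP : v ∈ P) (hvC : v ∈ C) : P ⊆ C := by
  have unique_adj : ∀ a ∈ C, ∀ b, P ∩ insert c C ⊆ {a, b} → ∀ u ∈ P, G.Adj a u → u = b :=
    fun a haC b hab u huP hau =>
      (hab ⟨huP, hL.mem_of_adj a haC u (hD.subset hP huP) hau⟩).resolve_left (G.ne_of_adj hau).symm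
  obtain ⟨w, hwP, hvw, hPK⟩ := hL.exists_adj_inter_subset hD hP hvP hvC
  have hwC : w ∈ C := (hL.mem_of_adj v hvC w (hD.subset hP hwP) hvw).resolve_left
    fun h => hL.notMem_of_mem hD hP hvP hvC (h ▸ hwP)
  obtain ⟨w', -, -, hPK'⟩ := hL.exists_adj_inter_subset hD hP hwP hwC
  have hw' : w' = v := (unique_adj w hwC w' hPK' v hvP hvw.symm).symm
  obtain ⟨n, -, hpath⟩ := hD.isInducedPathOn P hP
  rw [hpath.eq_pair hvP hwP hvw (unique_adj v hvC w hPK) (hw' ▸ unique_adj w hwC w' hPK')]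
  exact Set.insert_subset hvC (Set.singleton_subset_iff.2 hwC)

end IsOddCliqueLeaf

theorem IsInducedPathCover.not_isOddComplete [Finite W] (hD : IsInducedPathCover G H D)
    (hH : H.Nonempty) : ¬ IsOddComplete G H := fun hodd => by
  obtain ⟨c, hc⟩ := hH
  have hHc : insert c (H \ {c}) = H := by rw [Set.insert_sdiff_singleton, Set.insert_eq_of_mem hc]
  have hL : IsOddCliqueLeaf G H (H \ {c}) c :=
    { notMem := fun h => h.2 rfl
      subset := hHc.le
      isOddComplete := by rwa [hHc]
      mem_of_adj := fun _ _ u hu _ => by rwa [hHc] }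
  obtain ⟨P, hP, hcP⟩ := hD.exists_mem hc
  obtain ⟨m, hm, hpath⟩ := hD.isInducedPathOn P hP
  obtain ⟨w, hwP, hcw⟩ := hpath.exists_adj hm hcP
  exact hL.notMem_of_mem hD hP hwP ⟨hD.subset hP hwP, (G.ne_of_adj hcw).symm⟩ hcP

end Cover

theorem ConnectedIn.not_isInducedPathCover {W : Type*} [Finite W] {G : SimpleGraph W}
    {H : Set W} {D : Set (Set W)} (hH : ConnectedIn G H) (hne : H.Nonempty)
    (hblocks : ∀ B, IsBlockWithin G H B → IsOddComplete G B) : ¬ IsInducedPathCover G H D := by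
  induction hn : H.ncard using Nat.strong_induction_on generalizing H D with
  | _ n ih =>
  intro hD
  by_cases hcut : ∀ c ∈ H, ConnectedIn G (H \ {c})
  · exact hD.not_isOddComplete hne (hblocks H (isBlockWithin_self hne hH hcut))
  · obtain ⟨c₀, hc₀, hc₀cut⟩ := not_forall₂.1 hcut
    obtain ⟨c, hc, x, hx, y, hy, hyC, hleaf⟩ :=
      exists_componentIn_forall_connectedIn hH hc₀ hc₀cut
    set C := componentIn G (H \ {c}) x
    have hL : IsOddCliqueLeaf G H C c :=
      { notMem := fun h => h.1.2 rfl
        subset := Set.insert_subset hc (componentIn_subset.trans Set.sdiff_subset)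
        isOddComplete := hblocks _ (isBlockWithin_insert_componentIn hH hc hx hleaf)
        mem_of_adj := fun v hv u hu hvu => or_iff_not_imp_left.2 fun huc =>
          mem_componentIn_of_adj hv ⟨hu, huc⟩ hvu }
    have hlt : (H \ C).ncard < n := hn ▸ Set.ncard_lt_ncard
      (Set.sdiff_ssubset_left_iff.2 ⟨x, hx.1, mem_componentIn_self hx⟩)
    exact ih _ hlt (connectedIn_diff_componentIn hH hc) ⟨c, hc, hL.notMem⟩
      (fun B hB => hblocks B (hB.of_diff_componentIn hH hc hy hyC)) rfl
      (hD.diff fun _ hP _ hvP hvC => hL.subset_of_mem hD hP hvP hvC)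

/-- a connected graph all of whose blocks are complete graphs of odd
order has no IPD. -/
theorem all_blocks_odd_complete_no_IPD (G : SimpleGraph V)
    (hconn : G.Connected)
    (hbad : ∀ B : Set V, IsBlock G B → IsOddComplete G B) :
    ¬ HasIPD G := by
  rintro ⟨D, hD, hpaths⟩
  have hD' : IsInducedPathCover G Set.univ D := ⟨hD.sUnion_eq_univ, hD.pairwiseDisjoint, hpaths⟩
  exact hconn.preconnected.connectedIn_univ.not_isInducedPathCover
    ⟨hconn.nonempty.some, trivial⟩ hbad hD'
end

section
/- Let G be a bipartite cubic graph and let C: v_1, ..., v_t, v_1 be a cycle in G of length t with t ≡ 2 (mod 3) and t ≥ 8. Then the vertices of C can be partitioned into at most ⌊t/3⌋ induced paths of G, each of order at least 2. -/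
open SimpleGraph

variable {V : Type*} [Fintype V]

lemma induced_path_of (G : SimpleGraph V) (n : ℕ) (w : Fin n → V)
    (hw : Function.Injective w)
    (hadj : ∀ a b : Fin n, (a : ℕ) + 1 = b → G.Adj (w a) (w b))
    (hnon : ∀ a b : Fin n, (a : ℕ) + 2 ≤ b → ¬ G.Adj (w a) (w b)) :
    IsInducedPathOn G (Set.range w) n := by
  refine ⟨SimpleGraph.Iso.symm ⟨Equiv.ofInjective w hw, ?_⟩⟩
  intro a b
  simp only [Equiv.ofInjective_apply, comap_adj, Function.Embedding.coe_subtype, pathGraph_adj]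
  constructor
  · intro h
    rcases Nat.lt_trichotomy a b with hlt | heq | hlt
    · rcases Nat.lt_or_ge ((a : ℕ) + 1) b with h2 | h2
      · exact absurd h (hnon a b (by omega))
      · left; omega
    · exact absurd h (by rw [Fin.ext_iff.mpr heq]; exact G.irrefl)
    · rcases Nat.lt_or_ge ((b : ℕ) + 1) a with h2 | h2
      · exact absurd h.symm (hnon b a (by omega))
      · right; omega
  · rintro (h | h)
    · exact hadj a b h
    · exact (hadj b a h).symm

lemma cut_mem (c : ℕ → ℕ) (k m : ℕ) (hm : c 0 ≤ m) : m < c k →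
    ∃ j, j < k ∧ c j ≤ m ∧ m < c (j + 1) := by
  induction k with
  | zero => omega
  | succ k ih =>
    intro hmk
    by_cases h : m < c k
    · obtain ⟨j, hj, h⟩ := ih h; exact ⟨j, by omega, h⟩
    · exact ⟨k, by omega, by omega, hmk⟩

lemma cut_mono (c : ℕ → ℕ) (k : ℕ) (hcg : ∀ j, j < k → c j + 2 ≤ c (j + 1)) :
    ∀ b ≤ k, ∀ a ≤ b, c a ≤ c b := by
  intro b
  induction b with
  | zero =>
    intro _ a ha
    have h0 : a = 0 := by omega
    subst h0; exact le_rfl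
  | succ b ih =>
    intro hbk a hab
    rcases Nat.eq_or_lt_of_le hab with h | h
    · subst h; exact le_rfl
    · have := ih (by omega) a (by omega)
      have := hcg b (by omega)
      omega

lemma four_nbrs (G : SimpleGraph V) [DecidableRel G.Adj]
    (hcubic : G.IsRegularOfDegree 3) (u a b c d : V)
    (ha : G.Adj u a) (hb : G.Adj u b) (hc : G.Adj u c) (hd : G.Adj u d)
    (hab : a ≠ b) (hac : a ≠ c) (hbc : b ≠ c) (hda : d ≠ a) (hdb : d ≠ b) (hdc : d ≠ c) :
    False := by
  classical
  have hsub : ({a, b, c, d} : Finset V) ⊆ G.neighborFinset u := by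
    intro x hx
    simp only [Finset.mem_insert, Finset.mem_singleton] at hx
    rw [SimpleGraph.mem_neighborFinset]
    rcases hx with rfl | rfl | rfl | rfl <;> assumption
  have hcard : ({a, b, c, d} : Finset V).card = 4 := by
    rw [Finset.card_insert_of_notMem (by simp [hab, hac, hda.symm]),
        Finset.card_insert_of_notMem (by simp [hbc, hdb.symm]),
        Finset.card_insert_of_notMem (by simp [hdc.symm]),
        Finset.card_singleton]
  have := Finset.card_le_card hsub
  rw [hcard, G.card_neighborFinset_eq_degree, hcubic u] at this
  omega

lemma block_path (G : SimpleGraph V) (t : ℕ) (ht : 8 ≤ t)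
    (v : ZMod t → V) (hinj : Function.Injective v)
    (hadj : ∀ x : ZMod t, G.Adj (v x) (v (x + 1)))
    (no2 : ∀ x : ZMod t, ¬ G.Adj (v x) (v (x + 2)))
    (no4 : ∀ x : ZMod t, ¬ G.Adj (v x) (v (x + 4)))
    (i : ZMod t) (a n : ℕ) (han : a + n ≤ t) (hn5 : n ≤ 5)
    (h3 : ∀ m : ℕ, a ≤ m → m + 3 < a + n → ¬ G.Adj (v (i + (m : ZMod t))) (v (i + (m : ZMod t) + 3))) :
    IsInducedPathOn G ((fun m : ℕ => v (i + (m : ZMod t))) '' Set.Ico a (a + n)) n := by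
  haveI : NeZero t := ⟨by omega⟩
  set w : Fin n → V := fun q => v (i + ((a + (q : ℕ) : ℕ) : ZMod t)) with hwdef
  have hrange : Set.range w = (fun m : ℕ => v (i + (m : ZMod t))) '' Set.Ico a (a + n) := by
    ext x
    constructor
    · rintro ⟨q, rfl⟩
      exact ⟨a + (q : ℕ), ⟨Nat.le_add_right _ _, by omega⟩, rfl⟩
    · rintro ⟨m, hm, rfl⟩
      simp only [Set.mem_Ico] at hm
      refine ⟨⟨m - a, by omega⟩, ?_⟩
      simp only [hwdef, Fin.val_mk]
      have hma : a + (m - a) = m := by omega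
      rw [hma]
  rw [← hrange]
  apply induced_path_of
  · intro q q' h
    have h2 := hinj h
    have h3 : ((a + (q : ℕ) : ℕ) : ZMod t) = ((a + (q' : ℕ) : ℕ) : ZMod t) := by
      have := add_left_cancel h2
      exact this
    have h4 : a + (q : ℕ) = a + (q' : ℕ) := by
      have := congrArg ZMod.val h3
      rwa [ZMod.val_cast_of_lt (by omega), ZMod.val_cast_of_lt (by omega)] at this
    exact Fin.ext (by omega)
  · intro q q' hqq'
    have : i + ((a + (q' : ℕ) : ℕ) : ZMod t) = i + ((a + (q : ℕ) : ℕ) : ZMod t) + 1 := by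
      rw [← hqq']
      push_cast
      ring
    rw [hwdef]
    simp only
    rw [this]
    exact hadj _
  · intro q q' hqq'
    have hlt : (q' : ℕ) < n := q'.isLt
    have hcases : (q' : ℕ) = (q : ℕ) + 2 ∨ (q' : ℕ) = (q : ℕ) + 3 ∨ (q' : ℕ) = (q : ℕ) + 4 := by omega
    rw [hwdef]; simp only
    rcases hcases with h | h | h
    · have heq : i + ((a + (q' : ℕ) : ℕ) : ZMod t) = i + ((a + (q : ℕ) : ℕ) : ZMod t) + 2 := by
        rw [h]; push_cast; ring
      rw [heq]; exact no2 _
    · have heq : i + ((a + (q' : ℕ) : ℕ) : ZMod t) = i + ((a + (q : ℕ) : ℕ) : ZMod t) + 3 := by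
        rw [h]; push_cast; ring
      rw [heq]; exact h3 (a + (q : ℕ)) (Nat.le_add_right _ _) (by omega)
    · have heq : i + ((a + (q' : ℕ) : ℕ) : ZMod t) = i + ((a + (q : ℕ) : ℕ) : ZMod t) + 4 := by
        rw [h]; push_cast; ring
      rw [heq]; exact no4 _

lemma cuts_aux (G : SimpleGraph V) (t : ℕ) (ht : 1 ≤ t)
    (v : ZMod t → V) (hinj : Function.Injective v) (i : ZMod t)
    (k : ℕ) (c : ℕ → ℕ) (hc0 : c 0 = 0) (hck : c k = t)
    (hcg : ∀ j, j < k → c j + 2 ≤ c (j + 1))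
    (hblocks : ∀ j, j < k →
      IsInducedPathOn G ((fun m : ℕ => v (i + (m : ZMod t))) '' Set.Ico (c j) (c (j + 1)))
        (c (j + 1) - c j)) :
    ∃ D : Set (Set V), ⋃₀ D = Set.range v ∧ D.PairwiseDisjoint id ∧
      D.ncard ≤ k ∧ ∀ P ∈ D, ∃ n, 2 ≤ n ∧ IsInducedPathOn G P n := by
  classical
  haveI : NeZero t := ⟨by omega⟩
  set w : ℕ → V := fun m => v (i + (m : ZMod t)) with hwdef
  have hwinj : ∀ m m', m < t → m' < t → w m = w m' → m = m' := by
    intro m m' hm hm' h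
    have h2 := add_left_cancel (hinj h)
    have := congrArg ZMod.val h2
    rwa [ZMod.val_cast_of_lt hm, ZMod.val_cast_of_lt hm'] at this
  have hmono := cut_mono c k hcg
  set f : Fin k → Set V := fun j => w '' Set.Ico (c j) (c (j + 1)) with hfdef
  refine ⟨Set.range f, ?_, ?_, ?_, ?_⟩
  · rw [Set.sUnion_range]
    ext x
    simp only [Set.mem_iUnion, hfdef, Set.mem_image, Set.mem_Ico, Set.mem_range]
    constructor
    · rintro ⟨j, m, hm, rfl⟩
      exact ⟨i + (m : ZMod t), rfl⟩
    · rintro ⟨y, rfl⟩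
      obtain ⟨j, hj, hjm⟩ := cut_mem c k (y - i).val (by omega) (by rw [hck]; exact ZMod.val_lt _)
      refine ⟨⟨j, hj⟩, (y - i).val, hjm, ?_⟩
      rw [hwdef]
      simp only
      rw [ZMod.natCast_val, ZMod.cast_id]
      congr 1
      ring
  · rintro P ⟨j, rfl⟩ Q ⟨j', rfl⟩ hPQ
    have hjj' : j ≠ j' := by rintro rfl; exact hPQ rfl
    intro S hS1 hS2 x hx
    have h1 := hS1 hx
    have h2 := hS2 hx
    simp only [hfdef, id, Set.mem_image, Set.mem_Ico] at h1 h2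
    obtain ⟨m, hm, rfl⟩ := h1
    obtain ⟨m', hm', hmm⟩ := h2
    have hcj1 : c (j + 1 : ℕ) ≤ t := hck ▸ hmono k le_rfl (j + 1 : ℕ) j.isLt
    have hcj1' : c (j' + 1 : ℕ) ≤ t := hck ▸ hmono k le_rfl (j' + 1 : ℕ) j'.isLt
    have := hwinj m' m (by omega) (by omega) hmm
    subst this
    rcases Nat.lt_or_ge (j : ℕ) (j' : ℕ) with h | h
    · have := hmono (j' : ℕ) (by omega) (j + 1 : ℕ) (by omega)
      omega
    · have hlt : (j' : ℕ) < (j : ℕ) := by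
        rcases Nat.lt_or_ge (j' : ℕ) (j : ℕ) with h' | h'
        · exact h'
        · exact absurd (Fin.ext (by omega)) hjj'
      have := hmono (j : ℕ) (by omega) (j' + 1 : ℕ) (by omega)
      omega
  · have : Set.range f = ↑(Finset.univ.image f) := by
      rw [Finset.coe_image, Finset.coe_univ, Set.image_univ]
    rw [this, Set.ncard_coe_finset]
    calc (Finset.univ.image f).card ≤ Finset.univ.card := Finset.card_image_le
      _ = k := by simp
  · rintro P ⟨j, rfl⟩
    refine ⟨c (j + 1 : ℕ) - c (j : ℕ), by have := hcg j j.isLt; omega, ?_⟩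
    exact hblocks j j.isLt

/-- in a bipartite cubic graph, the vertex set of a cycle
v_1, ..., v_t, v_1 with t ≡ 2 (mod 3), t ≥ 8, can be partitioned into at most ⌊t/3⌋
induced paths, each of order at least 2. -/
theorem bipartite_cubic_cycle_mod_two_decomposition (G : SimpleGraph V)
    [DecidableRel G.Adj] (hbip : G.Colorable 2) (hcubic : G.IsRegularOfDegree 3)
    (t : ℕ) (h8 : 8 ≤ t) (hmod : t % 3 = 2)
    (v : ZMod t → V) (hinj : Function.Injective v)
    (hcyc : ∀ i : ZMod t, G.Adj (v i) (v (i + 1))) :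
    ∃ D : Set (Set V), ⋃₀ D = Set.range v ∧ D.PairwiseDisjoint id ∧
      D.ncard ≤ t / 3 ∧ ∀ P ∈ D, ∃ n, 2 ≤ n ∧ IsInducedPathOn G P n := by
  classical
  haveI : NeZero t := ⟨by omega⟩
  obtain ⟨C⟩ := hbip
  have f2 : ∀ a b c : Fin 2, a ≠ b → b ≠ c → a = c := by decide
  have hcol : ∀ x : ZMod t, C (v x) ≠ C (v (x + 1)) := fun x => C.valid (hcyc x)
  have hcol2 : ∀ x : ZMod t, C (v x) = C (v (x + 2)) := by
    intro x
    have h1 := hcol x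
    have h2 := hcol (x + 1)
    rw [show x + 1 + 1 = x + 2 by ring] at h2
    exact f2 _ _ _ h1 h2
  have no2 : ∀ x : ZMod t, ¬ G.Adj (v x) (v (x + 2)) := by
    intro x hA
    exact C.valid hA (hcol2 x)
  have no4 : ∀ x : ZMod t, ¬ G.Adj (v x) (v (x + 4)) := by
    intro x hA
    have h1 := hcol2 x
    have h2 := hcol2 (x + 2)
    rw [show x + 2 + 2 = x + 4 by ring] at h2
    exact C.valid hA (h1.trans h2)
  have hne : ∀ (x : ZMod t) (d : ℕ), 0 < d → d < t → v x ≠ v (x + (d : ℕ)) := by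
    intro x d hd1 hd2 h
    have h2 : x = x + ((d : ℕ) : ZMod t) := hinj h
    have h3 : ((d : ℕ) : ZMod t) = 0 := (left_eq_add.mp h2)
    have := congrArg ZMod.val h3
    rw [ZMod.val_cast_of_lt hd2, ZMod.val_zero] at this
    omega
  have chord_spacing : ∀ x : ZMod t, G.Adj (v x) (v (x + 3)) →
      G.Adj (v (x + 3)) (v (x + 3 + 3)) → False := by
    intro x h1 h2
    refine four_nbrs G hcubic (v (x + 3)) (v (x + 2)) (v (x + 4)) (v x) (v (x + 3 + 3))
      ?_ ?_ h1.symm h2 ?_ ?_ ?_ ?_ ?_ ?_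
    · have := (hcyc (x + 2)).symm
      rwa [show x + 2 + 1 = x + 3 by ring] at this
    · have := hcyc (x + 3)
      rwa [show x + 3 + 1 = x + 4 by ring] at this
    · have := hne (x + 2) 2 (by omega) (by omega)
      rwa [show x + 2 + ((2 : ℕ) : ZMod t) = x + 4 by push_cast; ring] at this
    · have := (hne x 2 (by omega) (by omega)).symm
      rwa [show x + ((2 : ℕ) : ZMod t) = x + 2 by push_cast; ring] at this
    · have := (hne x 4 (by omega) (by omega)).symm
      rwa [show x + ((4 : ℕ) : ZMod t) = x + 4 by push_cast; ring] at this
    · have := (hne (x + 2) 4 (by omega) (by omega)).symm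
      rwa [show x + 2 + ((4 : ℕ) : ZMod t) = x + 3 + 3 by push_cast; ring] at this
    · have := (hne (x + 4) 2 (by omega) (by omega)).symm
      rwa [show x + 4 + ((2 : ℕ) : ZMod t) = x + 3 + 3 by push_cast; ring] at this
    · have := (hne x 6 (by omega) (by omega)).symm
      rwa [show x + ((6 : ℕ) : ZMod t) = x + 3 + 3 by push_cast; ring] at this
  obtain ⟨i, hi⟩ : ∃ i : ZMod t, ¬ G.Adj (v i) (v (i + 3)) := by
    by_cases h : G.Adj (v 0) (v (0 + 3))
    · refine ⟨0 + 3, fun h' => chord_spacing 0 h h'⟩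
    · exact ⟨0, h⟩
  set k := t / 3 with hkdef
  have htk : t = 3 * k + 2 := by omega
  have hk2 : 2 ≤ k := by omega
  by_cases hei1 : G.Adj (v (i + 1)) (v (i + 1 + 3))
  · -- two P4's at i and i+4
    have hni4 : ¬ G.Adj (v (i + 4)) (v (i + 4 + 3)) := by
      intro h
      refine chord_spacing (i + 1) hei1 ?_
      rw [show i + 1 + 3 = i + 4 by ring]
      exact h
    refine cuts_aux G t (by omega) v hinj i k
      (fun j => if j = 0 then 0 else if j = 1 then 4 else 3 * j + 2) (by simp) ?_ ?_ ?_
    · simp only [if_neg (by omega : ¬ k = 0), if_neg (by omega : ¬ k = 1)]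
      omega
    · intro j hj
      rcases j with _ | _ | j <;> simp <;> omega
    · intro j hj
      rcases j with _ | _ | j
      · have ha := block_path G t h8 v hinj hcyc no2 no4 i 0 4 (by omega) (by omega) ?_
        · simpa using ha
        · intro m hm1 hm2
          have hm0 : m = 0 := by omega
          subst hm0
          simpa using hi
      · have ha := block_path G t h8 v hinj hcyc no2 no4 i 4 4 (by omega) (by omega) ?_
        · simpa using ha
        · intro m hm1 hm2
          have hm0 : m = 4 := by omega
          subst hm0
          have : i + ((4 : ℕ) : ZMod t) = i + 4 := by push_cast; ring
          rw [this]
          exact hni4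
      · have ha := block_path G t h8 v hinj hcyc no2 no4 i (3 * (j + 2) + 2) 3
          (by omega) (by omega) ?_
        · simp only [if_neg (show ¬ j + 1 + 1 = 0 by omega), if_neg (show ¬ j + 1 + 1 = 1 by omega),
            if_neg (show ¬ j + 1 + 1 + 1 = 0 by omega), if_neg (show ¬ j + 1 + 1 + 1 = 1 by omega)]
          rw [show 3 * (j + 1 + 1) + 2 = 3 * (j + 2) + 2 by ring,
            show 3 * (j + 1 + 1 + 1) + 2 = 3 * (j + 2) + 2 + 3 by ring,
            show 3 * (j + 2) + 2 + 3 - (3 * (j + 2) + 2) = 3 by omega]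
          exact ha
        · intro m hm1 hm2; omega
  · -- P5 at i
    refine cuts_aux G t (by omega) v hinj i k
      (fun j => if j = 0 then 0 else 3 * j + 2) (by simp) ?_ ?_ ?_
    · simp only [if_neg (by omega : ¬ k = 0)]
      omega
    · intro j hj
      rcases j with _ | j <;> simp <;> omega
    · intro j hj
      rcases j with _ | j
      · have ha := block_path G t h8 v hinj hcyc no2 no4 i 0 5 (by omega) (by omega) ?_
        · simpa using ha
        · intro m hm1 hm2
          have hm0 : m = 0 ∨ m = 1 := by omega
          rcases hm0 with rfl | rfl
          · simpa using hi
          · have : i + ((1 : ℕ) : ZMod t) = i + 1 := by push_cast; ring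
            rw [this]
            exact hei1
      · have ha := block_path G t h8 v hinj hcyc no2 no4 i (3 * (j + 1) + 2) 3
          (by omega) (by omega) ?_
        · simp only [if_neg (show ¬ j + 1 = 0 by omega), if_neg (show ¬ j + 1 + 1 = 0 by omega)]
          rw [show 3 * (j + 1 + 1) + 2 = 3 * (j + 1) + 2 + 3 by ring,
            show 3 * (j + 1) + 2 + 3 - (3 * (j + 1) + 2) = 3 by omega]
          exact ha
        · intro m hm1 hm2; omega
end
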